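/- arXiv:0912.4683 — 8 statements merged into one kernel-verified Lean document; each statement's English description precedes it below -/
import Mathlib

section
/- Let m ≥ 1, let A be a real m×m matrix all of whose characteristic-polynomial roots are real and strictly positive, let λ > 0, and let p : ℝ^m → ℝ be any polynomial function. Then there exists a unique polynomial function u : ℝ^m → ℝ, of degree at most the degree of p, such that λ·u(x) + ⟨A x, ∇u(x)⟩ = p(x) for all x ∈ ℝ^m. -/
open MvPolynomial

namespace Stmt1Aux


variable {m : ℕ} {R : Type*} [CommRing R]

/-- The derivation `u ↦ ⟨A x, ∇u⟩` on polynomials. -/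
noncomputable def Dder (A : Matrix (Fin m) (Fin m) R) :
    Derivation R (MvPolynomial (Fin m) R) (MvPolynomial (Fin m) R) :=
  mkDerivation R (fun i => ∑ j, A i j • (X j : MvPolynomial (Fin m) R))

lemma Dder_X (A : Matrix (Fin m) (Fin m) R) (i : Fin m) :
    Dder A (X i) = ∑ j, A i j • (X j : MvPolynomial (Fin m) R) :=
  mkDerivation_X _ _ _

lemma Dder_eq_sum (A : Matrix (Fin m) (Fin m) R) (u : MvPolynomial (Fin m) R) :
    Dder A u = ∑ i, pderiv i u * ∑ j, A i j • (X j : MvPolynomial (Fin m) R) := by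
  induction u using MvPolynomial.induction_on with
  | C a => simp [Derivation.map_algebraMap]
  | add p q hp hq => simp [map_add, hp, hq, add_mul, Finset.sum_add_distrib]
  | mul_X p k hp =>
      have hpd : ∀ i : Fin m, pderiv i (p * X k)
          = pderiv i p * X k + if i = k then p else 0 := by
        intro i
        rw [pderiv_mul, pderiv_X]
        rcases eq_or_ne i k with h | h <;> simp [h, Pi.single_apply]
      have hr : ∑ i, pderiv i (p * X k) * ∑ j, A i j • (X j : MvPolynomial (Fin m) R)
          = X k * (∑ i, pderiv i p * ∑ j, A i j • (X j : MvPolynomial (Fin m) R))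
            + p * ∑ j, A k j • (X j : MvPolynomial (Fin m) R) := by
        rw [Finset.sum_congr rfl fun i _ => by rw [hpd i, add_mul, ite_mul, zero_mul]]
        rw [Finset.sum_add_distrib, Finset.mul_sum,
          Finset.sum_ite_eq' Finset.univ k
            fun j => p * ∑ j', A j j' • (X j' : MvPolynomial (Fin m) R)]
        simp only [Finset.mem_univ, if_true]
        congr 1
        exact Finset.sum_congr rfl fun i _ => by ring
      rw [hr, Derivation.leibniz]
      simp only [smul_eq_mul, hp, Dder_X]
      ring

lemma eval_Dder {A : Matrix (Fin m) (Fin m) R} (u : MvPolynomial (Fin m) R) (x : Fin m → R) :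
    eval x (Dder A u) = ∑ i, A.mulVec x i * eval x (pderiv i u) := by
  rw [Dder_eq_sum]
  rw [map_sum]
  refine Finset.sum_congr rfl fun i _ => ?_
  rw [map_mul, map_sum]
  simp only [smul_eq_C_mul, map_mul, eval_C, eval_X, Matrix.mulVec, dotProduct]
  ring

lemma map_Dder {S : Type*} [CommRing S] (f : R →+* S) (A : Matrix (Fin m) (Fin m) R)
    (u : MvPolynomial (Fin m) R) :
    map f (Dder A u) = Dder (A.map f) (map f u) := by
  rw [Dder_eq_sum, Dder_eq_sum, map_sum]
  refine Finset.sum_congr rfl fun i _ => ?_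
  rw [map_mul, pderiv_map, map_sum]
  congr 1
  refine Finset.sum_congr rfl fun j _ => ?_
  rw [smul_eq_C_mul, smul_eq_C_mul, map_mul, map_C, map_X, Matrix.map_apply]

lemma totalDegree_monomial_pderiv_mul_X_le (s : Fin m →₀ ℕ) (c : R) (i j : Fin m)
    (hs : s.sum (fun _ e => e) ≤ n) :
    (pderiv i (monomial s c) * X j).totalDegree ≤ n := by
  rw [pderiv_monomial, X, monomial_mul, mul_one]
  rcases eq_or_ne (c * s i) 0 with h | h
  · simp [h]
  · have hsi : s i ≠ 0 := by rintro h0; simp [h0] at h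
    refine (totalDegree_monomial_le _ _).trans ?_
    simp only [Function.id_def]
    have hle : Finsupp.single i 1 ≤ s := by
      rw [Finsupp.single_le_iff]
      omega
    have hsplit : (s - Finsupp.single i 1) + Finsupp.single i 1 = s :=
      tsub_add_cancel_of_le hle
    have hsum : (s - Finsupp.single i 1).sum (fun _ e => e) + 1 = s.sum (fun _ e => e) := by
      conv_rhs => rw [← hsplit]
      rw [Finsupp.sum_add_index (by simp) (by intros; rfl)]
      simp
    have : ((s - Finsupp.single i 1) + Finsupp.single j 1).sum (fun _ e => e)
        = (s - Finsupp.single i 1).sum (fun _ e => e) + 1 := by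
      rw [Finsupp.sum_add_index (by simp) (by intros; rfl)]
      simp
    omega

lemma totalDegree_Dder_le (A : Matrix (Fin m) (Fin m) R) (u : MvPolynomial (Fin m) R) :
    (Dder A u).totalDegree ≤ u.totalDegree := by
  rw [Dder_eq_sum]
  refine totalDegree_finsetSum_le fun i _ => ?_
  rw [Finset.mul_sum]
  refine totalDegree_finsetSum_le fun j _ => ?_
  rw [smul_eq_C_mul, show pderiv i u * (C (A i j) * X j) = C (A i j) * (pderiv i u * X j) by ring,
    ← smul_eq_C_mul]
  refine (totalDegree_smul_le _ _).trans ?_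
  -- now bound pderiv i u * X j
  conv_lhs => rw [u.as_sum, map_sum (pderiv i) _ u.support, Finset.sum_mul]
  refine totalDegree_finsetSum_le fun s hs => ?_
  exact totalDegree_monomial_pderiv_mul_X_le s _ i j (le_totalDegree hs)
/-- The linear form `c ↦ ∑ i, c i • X i`. -/
noncomputable def lform : (Fin m → R) →ₗ[R] MvPolynomial (Fin m) R where
  toFun c := ∑ i, c i • X i
  map_add' a b := by simp [add_smul, Finset.sum_add_distrib]
  map_smul' r a := by simp [smul_smul, Finset.smul_sum]

lemma lform_apply (c : Fin m → R) : lform c = ∑ i, c i • (X i : MvPolynomial (Fin m) R) := rfl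

lemma lform_single (i : Fin m) : lform (Pi.single i (1 : R)) = (X i : MvPolynomial (Fin m) R) := by
  rw [lform_apply, Finset.sum_eq_single i (fun j _ hj => by simp [Pi.single_eq_of_ne hj])
    (by simp)]
  simp

lemma Dder_lform (A : Matrix (Fin m) (Fin m) R) (c : Fin m → R) :
    Dder A (lform c) = lform (A.transpose.mulVec c) := by
  rw [lform_apply, map_sum, lform_apply]
  rw [Finset.sum_congr rfl fun i (_ : i ∈ Finset.univ) => by
    rw [Derivation.map_smul, Dder_X, Finset.smul_sum]]
  rw [Finset.sum_comm]
  refine Finset.sum_congr rfl fun j _ => ?_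
  rw [Matrix.mulVec, dotProduct, Finset.sum_smul]
  refine Finset.sum_congr rfl fun i _ => ?_
  simp [smul_smul, Matrix.transpose_apply, mul_comm]

lemma pow_sub_smul_lform (A : Matrix (Fin m) (Fin m) R) (μ : R) (k : ℕ) (c : Fin m → R) :
    (((Dder A).toLinearMap - μ • (1 : Module.End R (MvPolynomial (Fin m) R))) ^ k) (lform c)
      = lform (((A.transpose.mulVecLin - μ • (1 : Module.End R (Fin m → R))) ^ k) c) := by
  induction k generalizing c with
  | zero => simp
  | succ k ih =>
      rw [pow_succ, pow_succ, Module.End.mul_apply, Module.End.mul_apply]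
      rw [show ((Dder A).toLinearMap - μ • (1 : Module.End R (MvPolynomial (Fin m) R))) (lform c)
          = lform ((A.transpose.mulVecLin - μ • (1 : Module.End R (Fin m → R))) c) by
        simp only [LinearMap.sub_apply, LinearMap.smul_apply, Module.End.one_apply,
          Derivation.coeFn_coe, Matrix.mulVecLin_apply, map_sub, map_smul]
        rw [Dder_lform]]
      exact ih _

/-- Leibniz: products of generalized eigenvectors of a derivation. -/
lemma derivation_pow_mul (D : Derivation R (MvPolynomial (Fin m) R) (MvPolynomial (Fin m) R))
    (μ ν : R) (n : ℕ) :
    ∀ (a b : ℕ) (u v : MvPolynomial (Fin m) R), a + b = n →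
      ((D.toLinearMap - μ • (1 : Module.End R (MvPolynomial (Fin m) R))) ^ a) u = 0 →
      ((D.toLinearMap - ν • (1 : Module.End R (MvPolynomial (Fin m) R))) ^ b) v = 0 →
      ((D.toLinearMap - (μ + ν) • (1 : Module.End R (MvPolynomial (Fin m) R))) ^ n) (u * v)
        = 0 := by
  induction n with
  | zero =>
      rintro a b u v hab hu hv
      obtain ⟨rfl, rfl⟩ : a = 0 ∧ b = 0 := by omega
      simp only [pow_zero, Module.End.one_apply] at hu ⊢
      rw [hu, zero_mul]
  | succ n ih =>
      rintro a b u v hab hu hv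
      rcases Nat.eq_zero_or_pos a with rfl | ha
      · simp only [pow_zero, Module.End.one_apply] at hu
        rw [hu, zero_mul, map_zero]
      rcases Nat.eq_zero_or_pos b with rfl | hb
      · simp only [pow_zero, Module.End.one_apply] at hv
        rw [hv, mul_zero, map_zero]
      obtain ⟨a', rfl⟩ : ∃ a', a = a' + 1 := ⟨a - 1, by omega⟩
      obtain ⟨b', rfl⟩ : ∃ b', b = b' + 1 := ⟨b - 1, by omega⟩
      rw [pow_succ, Module.End.mul_apply]
      have hprod : (D.toLinearMap - (μ + ν) • (1 : Module.End R (MvPolynomial (Fin m) R))) (u * v)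
          = ((D.toLinearMap - μ • (1 : Module.End R (MvPolynomial (Fin m) R))) u) * v
            + u * ((D.toLinearMap - ν • (1 : Module.End R (MvPolynomial (Fin m) R))) v) := by
        simp only [LinearMap.sub_apply, LinearMap.smul_apply, Module.End.one_apply,
          Derivation.coeFn_coe, D.leibniz u v, smul_eq_mul, add_smul, LinearMap.add_apply, smul_sub, sub_mul, mul_sub,
          smul_mul_assoc, mul_smul_comm]
        ring
      rw [hprod, map_add]
      rw [ih a' (b' + 1) _ _ (by omega) (by rw [pow_succ, Module.End.mul_apply] at hu; exact hu) hv]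
      rw [ih (a' + 1) b' _ _ (by omega) hu (by rw [pow_succ, Module.End.mul_apply] at hv; exact hv)]
      rw [add_zero]
lemma charpoly_transpose {R : Type*} [CommRing R] (B : Matrix (Fin m) (Fin m) R) :
    B.transpose.charpoly = B.charpoly := by
  unfold Matrix.charpoly
  rw [show Matrix.charmatrix B.transpose = (Matrix.charmatrix B).transpose by
    ext i j
    rcases eq_or_ne i j with rfl | h
    · simp
    · simp [Matrix.charmatrix_apply_ne _ _ _ h, Matrix.charmatrix_apply_ne _ _ _ (Ne.symm h),
        Matrix.transpose_apply]]
  rw [Matrix.det_transpose]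

lemma eigen_re_nonneg (B : Matrix (Fin m) (Fin m) ℂ)
    (hB : ∀ z ∈ B.charpoly.roots, 0 ≤ z.re) {μ : ℂ}
    (h : Module.End.maxGenEigenspace (Matrix.mulVecLin B.transpose) μ ≠ ⊥) : 0 ≤ μ.re := by
  obtain ⟨x, hx, hx0⟩ := (Submodule.ne_bot_iff _).mp h
  rw [Module.End.mem_maxGenEigenspace] at hx
  obtain ⟨k, hk⟩ := hx
  have hgen : Module.End.HasGenEigenvalue (Matrix.mulVecLin B.transpose) μ k := by
    intro hbot
    refine hx0 ?_
    have hxmem : x ∈ Module.End.genEigenspace (Matrix.mulVecLin B.transpose) μ k :=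
      (Module.End.mem_genEigenspace_nat).mpr hk
    rw [hbot] at hxmem
    simpa using hxmem
  have heig := Module.End.hasEigenvalue_of_hasGenEigenvalue hgen
  have hroot : (minpoly ℂ (Matrix.mulVecLin B.transpose)).IsRoot μ :=
    Module.End.hasEigenvalue_iff_isRoot.mp heig
  have hroot2 : (Matrix.mulVecLin B.transpose).charpoly.IsRoot μ :=
    hroot.dvd (LinearMap.minpoly_dvd_charpoly _)
  have hcp : (Matrix.mulVecLin B.transpose).charpoly = B.charpoly := by
    rw [← LinearMap.charpoly_toMatrix (f := Matrix.mulVecLin B.transpose)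
        (Pi.basisFun ℂ (Fin m)),
      LinearMap.toMatrix_eq_toMatrix', ← Matrix.toLin'_apply' B.transpose,
      LinearMap.toMatrix'_toLin', charpoly_transpose]
  rw [hcp] at hroot2
  exact hB μ (Polynomial.mem_roots'.mpr ⟨(Matrix.charpoly_monic B).ne_zero, hroot2⟩)

lemma injC (B : Matrix (Fin m) (Fin m) ℂ)
    (hB : ∀ z ∈ B.charpoly.roots, 0 ≤ z.re) (lamC : ℂ) (hlamC : 0 < lamC.re)
    (u : MvPolynomial (Fin m) ℂ) (hu : lamC • u + Dder B u = 0) : u = 0 := by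
  set DL : Module.End ℂ (MvPolynomial (Fin m) ℂ) := (Dder B).toLinearMap with hDL
  set s : Set (MvPolynomial (Fin m) ℂ) :=
    {w | ∃ ν : ℂ, 0 ≤ ν.re ∧ w ∈ DL.maxGenEigenspace ν} with hs
  have hmul : ∀ w₁ ∈ s, ∀ w₂ ∈ s, w₁ * w₂ ∈ s := by
    rintro w₁ ⟨ν₁, h₁, hm₁⟩ w₂ ⟨ν₂, h₂, hm₂⟩
    refine ⟨ν₁ + ν₂, by rw [Complex.add_re]; exact add_nonneg h₁ h₂, ?_⟩
    rw [Module.End.mem_maxGenEigenspace] at hm₁ hm₂ ⊢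
    obtain ⟨k₁, hk₁⟩ := hm₁; obtain ⟨k₂, hk₂⟩ := hm₂
    exact ⟨k₁ + k₂, derivation_pow_mul (Dder B) ν₁ ν₂ (k₁ + k₂) k₁ k₂ _ _ rfl hk₁ hk₂⟩
  set P : Submodule ℂ (MvPolynomial (Fin m) ℂ) := Submodule.span ℂ s with hP
  have hPmul : ∀ w₁ ∈ P, ∀ w₂ ∈ P, w₁ * w₂ ∈ P := by
    intro w₁ h₁ w₂ h₂
    have hmm := Submodule.mul_mem_mul h₁ h₂
    have hPP : P * P ≤ P := by
      rw [hP, Submodule.span_mul_span]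
      refine Submodule.span_le.mpr ?_
      rintro _ ⟨a, ha, b, hb, rfl⟩
      exact Submodule.subset_span (hmul a ha b hb)
    exact hPP hmm
  have hone : (1 : MvPolynomial (Fin m) ℂ) ∈ s := by
    refine ⟨0, le_rfl, ?_⟩
    rw [Module.End.mem_maxGenEigenspace]
    exact ⟨1, by simp [hDL, Derivation.map_one_eq_zero]⟩
  have hX : ∀ i, (X i : MvPolynomial (Fin m) ℂ) ∈ P := by
    intro i
    have htop := Module.End.iSup_maxGenEigenspace_eq_top (Matrix.mulVecLin B.transpose)
    have hle : (⊤ : Submodule ℂ (Fin m → ℂ)) ≤ Submodule.comap lform P := by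
      rw [← htop]
      refine iSup_le fun μ => ?_
      by_cases hbot : Module.End.maxGenEigenspace (Matrix.mulVecLin B.transpose) μ = ⊥
      · rw [hbot]; exact bot_le
      · intro c hc
        have hre := eigen_re_nonneg B hB hbot
        refine Submodule.subset_span ⟨μ, hre, ?_⟩
        rw [Module.End.mem_maxGenEigenspace] at hc ⊢
        obtain ⟨k, hk⟩ := hc
        exact ⟨k, by rw [hDL, pow_sub_smul_lform, hk, map_zero]⟩
    have hmem := hle (Submodule.mem_top : Pi.single i 1 ∈ ⊤)
    rw [Submodule.mem_comap, lform_single] at hmem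
    exact hmem
  have hall : ∀ w : MvPolynomial (Fin m) ℂ, w ∈ P := by
    let SA : Subalgebra ℂ (MvPolynomial (Fin m) ℂ) :=
      { carrier := P
        mul_mem' := fun ha hb => hPmul _ ha _ hb
        add_mem' := fun ha hb => P.add_mem ha hb
        one_mem' := Submodule.subset_span hone
        algebraMap_mem' := fun r => by
          show (algebraMap ℂ (MvPolynomial (Fin m) ℂ)) r ∈ P
          rw [Algebra.algebraMap_eq_smul_one]
          exact P.smul_mem r (Submodule.subset_span hone) }
    have hSA : SA = ⊤ := by
      rw [eq_top_iff, ← MvPolynomial.adjoin_range_X]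
      refine Algebra.adjoin_le ?_
      rintro _ ⟨i, rfl⟩
      exact hX i
    intro w
    have : w ∈ SA := hSA ▸ Algebra.mem_top
    exact this
  have humem : u ∈ DL.maxGenEigenspace (-lamC) := by
    rw [Module.End.mem_maxGenEigenspace]
    refine ⟨1, ?_⟩
    rw [pow_one, LinearMap.sub_apply, LinearMap.smul_apply, Module.End.one_apply, neg_smul,
      sub_neg_eq_add, add_comm]
    exact hu
  have hu2 : u ∈ ⨆ (ν : ℂ) (_ : ν ≠ -lamC), DL.maxGenEigenspace ν := by
    refine (Submodule.span_le.mpr ?_ : P ≤ _) (hall u)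
    rintro w ⟨ν, hν, hw⟩
    have hne : ν ≠ -lamC := by
      intro h
      rw [h, Complex.neg_re] at hν
      linarith
    exact le_iSup₂ (f := fun (ν : ℂ) (_ : ν ≠ -lamC) => DL.maxGenEigenspace ν) ν hne hw
  have hdisj := Module.End.independent_maxGenEigenspace DL (-lamC)
  have := hdisj.le_bot (Submodule.mem_inf.mpr ⟨humem, hu2⟩)
  simpa using this
lemma injR (A : Matrix (Fin m) (Fin m) ℝ)
    (hA : ∀ z ∈ (Polynomial.map (algebraMap ℝ ℂ) A.charpoly).roots, z.im = 0 ∧ 0 < z.re)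
    (lam : ℝ) (hlam : 0 < lam) (u : MvPolynomial (Fin m) ℝ)
    (hu : lam • u + Dder A u = 0) : u = 0 := by
  have hmapu := congrArg (map (algebraMap ℝ ℂ)) hu
  rw [map_add, map_Dder, map_zero] at hmapu
  have hsm : map (algebraMap ℝ ℂ) (lam • u)
      = (algebraMap ℝ ℂ lam) • map (algebraMap ℝ ℂ) u := by
    rw [smul_eq_C_mul, map_mul, map_C, smul_eq_C_mul]
  rw [hsm] at hmapu
  have hroots : ∀ z ∈ (A.map (algebraMap ℝ ℂ)).charpoly.roots, 0 ≤ z.re := by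
    intro z hz
    rw [Matrix.charpoly_map] at hz
    exact le_of_lt (hA z hz).2
  have h0 := injC (A.map (algebraMap ℝ ℂ)) hroots (algebraMap ℝ ℂ lam)
    (by simpa using hlam) _ hmapu
  have hinj : Function.Injective (map (algebraMap ℝ ℂ) :
      MvPolynomial (Fin m) ℝ → MvPolynomial (Fin m) ℂ) :=
    MvPolynomial.map_injective _ (algebraMap ℝ ℂ).injective
  exact hinj (by rw [h0, map_zero])

lemma existsSol (A : Matrix (Fin m) (Fin m) ℝ)
    (hA : ∀ z ∈ (Polynomial.map (algebraMap ℝ ℂ) A.charpoly).roots, z.im = 0 ∧ 0 < z.re)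
    (lam : ℝ) (hlam : 0 < lam) (p : MvPolynomial (Fin m) ℝ) :
    ∃ u, u.totalDegree ≤ p.totalDegree ∧ lam • u + Dder A u = p := by
  set N := p.totalDegree with hN
  set F : Module.End ℝ (MvPolynomial (Fin m) ℝ)
    := lam • (LinearMap.id : Module.End ℝ (MvPolynomial (Fin m) ℝ)) + (Dder A).toLinearMap
    with hF
  have hFapply : ∀ v, F v = lam • v + Dder A v := fun v => by
    simp [hF, LinearMap.add_apply, LinearMap.smul_apply, Derivation.coeFn_coe]
  have hmapV : ∀ v ∈ restrictTotalDegree (Fin m) ℝ N, F v ∈ restrictTotalDegree (Fin m) ℝ N := by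
    intro v hv
    rw [mem_restrictTotalDegree] at hv ⊢
    rw [hFapply]
    refine (totalDegree_add _ _).trans (max_le ((totalDegree_smul_le _ _).trans hv)
      ((totalDegree_Dder_le _ _).trans hv))
  set L : restrictTotalDegree (Fin m) ℝ N →ₗ[ℝ] restrictTotalDegree (Fin m) ℝ N :=
    F.restrict hmapV with hL
  have hLinj : Function.Injective L := by
    intro a b hab
    have h0 : F (a - b : MvPolynomial (Fin m) ℝ) = 0 := by
      have hval : (L a : MvPolynomial (Fin m) ℝ) = L b := by rw [hab]
      have hFab : F (a : MvPolynomial (Fin m) ℝ) = F (b : MvPolynomial (Fin m) ℝ) := hval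
      rw [map_sub, hFab, sub_self]
    rw [hFapply] at h0
    have := injR A hA lam hlam _ h0
    exact Subtype.ext (by rw [sub_eq_zero] at this; exact this)
  have hLsurj := LinearMap.surjective_of_injective hLinj
  obtain ⟨⟨u, hu⟩, hLu⟩ := hLsurj ⟨p, (mem_restrictTotalDegree _ _ _).mpr le_rfl⟩
  refine ⟨u, (mem_restrictTotalDegree _ _ _).mp hu, ?_⟩
  have hval : (L ⟨u, hu⟩ : MvPolynomial (Fin m) ℝ) = p := by rw [hLu]
  have hFu : F u = p := hval
  rw [← hFapply]
  exact hFu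

lemma hasFDerivAt_eval (u : MvPolynomial (Fin m) ℝ) (x : Fin m → ℝ) :
    HasFDerivAt (fun y : Fin m → ℝ => eval y u)
      (∑ i, eval x (pderiv i u) • (ContinuousLinearMap.proj i :
        (Fin m → ℝ) →L[ℝ] ℝ)) x := by
  induction u using MvPolynomial.induction_on with
  | C a =>
      have h1 : (fun y : Fin m → ℝ => eval y (C a : MvPolynomial (Fin m) ℝ)) = fun _ => a := by
        funext y; rw [eval_C]
      have h2 : (∑ i, eval x (pderiv i (C a : MvPolynomial (Fin m) ℝ)) •
          (ContinuousLinearMap.proj i : (Fin m → ℝ) →L[ℝ] ℝ)) = 0 := by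
        simp [pderiv_C]
      rw [h1, h2]
      exact hasFDerivAt_const a x
  | add p q hp hq =>
      have h1 : (fun y : Fin m → ℝ => eval y (p + q)) =
          fun y => eval y p + eval y q := by
        funext y; rw [map_add]
      have h := hp.add hq
      rw [h1]
      refine h.congr_fderiv (Eq.symm ?_)
      simp only [map_add]
      rw [← Finset.sum_add_distrib]
      refine Finset.sum_congr rfl fun i _ => ?_
      rw [add_smul]
  | mul_X p k hp =>
      have hk : HasFDerivAt (fun y : Fin m → ℝ => y k)
          (ContinuousLinearMap.proj k : (Fin m → ℝ) →L[ℝ] ℝ) x :=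
        hasFDerivAt_apply k x
      have h := hp.mul hk
      have h1 : (fun y : Fin m → ℝ => eval y (p * X k)) =
          fun y => eval y p * y k := by
        funext y; rw [map_mul, eval_X]
      rw [h1]
      refine h.congr_fderiv (Eq.symm ?_)
      refine ContinuousLinearMap.ext fun v => ?_
      simp only [ContinuousLinearMap.sum_apply, ContinuousLinearMap.smul_apply,
        ContinuousLinearMap.proj_apply, ContinuousLinearMap.add_apply, smul_eq_mul]
      have hterm : ∀ i : Fin m, eval x (pderiv i (p * X k)) * v i
          = eval x (pderiv i p) * x k * v i + (if i = k then eval x p * v i else 0) := by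
        intro i
        rw [pderiv_mul, pderiv_X, map_add, map_mul, eval_X]
        rcases eq_or_ne i k with rfl | hik
        · rw [Pi.single_eq_same, mul_one, if_pos rfl]
          ring
        · rw [Pi.single_eq_of_ne hik.symm, mul_zero, map_zero, if_neg hik]
          ring
      rw [Finset.sum_congr rfl fun i _ => hterm i, Finset.sum_add_distrib,
        Finset.sum_ite_eq' Finset.univ k (fun i => eval x p * v i)]
      simp only [Finset.mem_univ, if_true]
      rw [add_comm]
      congr 1
      rw [Finset.mul_sum]
      exact Finset.sum_congr rfl fun i _ => by ring

end Stmt1Aux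

/-- The `i`-th component of the Euclidean gradient of `u : ℝ^m → ℝ` at `x`. -/
noncomputable def grad {m : ℕ} (u : (Fin m → ℝ) → ℝ) (x : Fin m → ℝ) (i : Fin m) : ℝ :=
  fderiv ℝ u x (Pi.single i 1)

lemma Stmt1Aux.grad_eval {m : ℕ} (u : MvPolynomial (Fin m) ℝ) (x : Fin m → ℝ) (i : Fin m) :
    grad (fun x' => MvPolynomial.eval x' u) x i
      = MvPolynomial.eval x (MvPolynomial.pderiv i u) := by
  rw [grad, (Stmt1Aux.hasFDerivAt_eval u x).fderiv]
  simp only [ContinuousLinearMap.coe_sum', Finset.sum_apply, ContinuousLinearMap.coe_smul',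
    Pi.smul_apply, ContinuousLinearMap.proj_apply, smul_eq_mul]
  rw [Finset.sum_eq_single i (fun j _ hj => by rw [Pi.single_eq_of_ne hj, mul_zero]) (by simp)]
  rw [Pi.single_eq_same, mul_one]

/-- paper's Lemma 3.1, second part: if all roots of the characteristic
polynomial of `A` are real and strictly positive, `λ > 0`, and `p` is any polynomial
function, then there is a unique polynomial function `u`, of degree at most the degree
of `p`, with `λ·u(x) + ⟨A x, ∇u(x)⟩ = p(x)` for all `x`. -/
theorem stmt1 (m : ℕ) (hm : 1 ≤ m) (A : Matrix (Fin m) (Fin m) ℝ)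
    (hA : ∀ z ∈ (Polynomial.map (algebraMap ℝ ℂ) A.charpoly).roots, z.im = 0 ∧ 0 < z.re)
    (lam : ℝ) (hlam : 0 < lam) (p : MvPolynomial (Fin m) ℝ) :
    ∃! u : MvPolynomial (Fin m) ℝ,
      u.totalDegree ≤ p.totalDegree ∧
        ∀ x : Fin m → ℝ,
          lam * MvPolynomial.eval x u
              + ∑ i, A.mulVec x i * grad (fun x' => MvPolynomial.eval x' u) x i
            = MvPolynomial.eval x p := by
  classical
  have heval : ∀ (u : MvPolynomial (Fin m) ℝ) (x : Fin m → ℝ),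
      MvPolynomial.eval x (lam • u + Stmt1Aux.Dder A u)
        = lam * MvPolynomial.eval x u
          + ∑ i, A.mulVec x i * grad (fun x' => MvPolynomial.eval x' u) x i := by
    intro u x
    rw [map_add, Stmt1Aux.eval_Dder]
    congr 1
    · rw [MvPolynomial.smul_eq_C_mul, map_mul, MvPolynomial.eval_C]
    · exact Finset.sum_congr rfl fun i _ => by rw [Stmt1Aux.grad_eval]
  obtain ⟨u, hdeg, hequ⟩ := Stmt1Aux.existsSol A hA lam hlam p
  refine ⟨u, ⟨hdeg, fun x => by rw [← heval, hequ]⟩, ?_⟩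
  rintro v ⟨hdegv, hv⟩
  have hveq : lam • v + Stmt1Aux.Dder A v = p :=
    MvPolynomial.funext fun x => by rw [heval]; exact hv x
  have hsub : lam • (v - u) + Stmt1Aux.Dder A (v - u) = 0 := by
    rw [smul_sub, map_sub]
    have hre : lam • v - lam • u + (Stmt1Aux.Dder A v - Stmt1Aux.Dder A u)
        = (lam • v + Stmt1Aux.Dder A v) - (lam • u + Stmt1Aux.Dder A u) := by
      abel
    rw [hre, hveq, hequ, sub_self]
  have hvu := Stmt1Aux.injR A hA lam hlam _ hsub
  rw [sub_eq_zero] at hvu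
  exact hvu
end

section
/- Let m ≥ 1, let A be a real m×m matrix all of whose characteristic-polynomial roots are real and strictly positive, and let λ > 0. If u : ℝ^m → ℝ is a polynomial function with λ·u(x) + ⟨A x, ∇u(x)⟩ = 0 for all x ∈ ℝ^m, then u is identically zero. -/
/-- `u : ℝ^m → ℝ` is a polynomial function: it is given by a multivariate real
polynomial in the coordinates. -/
def IsPolyFun {m : ℕ} (u : (Fin m → ℝ) → ℝ) : Prop :=
  ∃ P : MvPolynomial (Fin m) ℝ, ∀ x, u x = MvPolynomial.eval x P


open MvPolynomial

namespace Stmt2Aux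

variable {m : ℕ} {S : Type*} [CommRing S]

/-- The linear form `∑ j, B i j * X j`. -/
noncomputable def lin (B : Matrix (Fin m) (Fin m) S) (i : Fin m) : MvPolynomial (Fin m) S :=
  ∑ j, C (B i j) * X j

/-- The first-order operator `P ↦ ∑ i, (∑ j B i j X j) ∂ᵢ P`. -/
noncomputable def Dop (B : Matrix (Fin m) (Fin m) S) (P : MvPolynomial (Fin m) S) :
    MvPolynomial (Fin m) S :=
  ∑ i, lin B i * pderiv i P

/-- Directional derivative `∑ i, v i * ∂ᵢ P`. -/
noncomputable def dd (v : Fin m → S) (P : MvPolynomial (Fin m) S) : MvPolynomial (Fin m) S :=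
  ∑ i, C (v i) * pderiv i P

lemma pderiv_pderiv_comm (i j : Fin m) (P : MvPolynomial (Fin m) S) :
    pderiv i (pderiv j P) = pderiv j (pderiv i P) := by
  induction P using MvPolynomial.induction_on' with
  | add p q hp hq => simp [hp, hq]
  | monomial u a =>
    by_cases h : i = j
    · subst h; rfl
    · rw [pderiv_monomial, pderiv_monomial, pderiv_monomial, pderiv_monomial]
      have h1 : u - Finsupp.single j 1 - Finsupp.single i 1
          = u - Finsupp.single i 1 - Finsupp.single j 1 := by
        ext k; simp [Finsupp.single_apply]; omega
      have h2 : ((u - Finsupp.single j 1 : (Fin m →₀ ℕ))) i = u i := by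
        simp [Finsupp.sub_apply, Finsupp.single_apply, Ne.symm h]
      have h3 : ((u - Finsupp.single i 1 : (Fin m →₀ ℕ))) j = u j := by
        simp [Finsupp.sub_apply, Finsupp.single_apply, h]
      rw [h1, h2, h3]; ring_nf

lemma pderiv_lin (B : Matrix (Fin m) (Fin m) S) (i k : Fin m) :
    pderiv k (lin B i) = C (B i k) := by
  rw [lin, map_sum]
  rw [Finset.sum_eq_single k]
  · simp
  · intro b _ hb; simp [pderiv_C_mul, pderiv_X_of_ne hb]
  · simp

lemma dd_single (i : Fin m) (P : MvPolynomial (Fin m) S) :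
    dd (Pi.single i (1 : S)) P = pderiv i P := by
  rw [dd, Finset.sum_eq_single i]
  · simp
  · intro b _ hb; simp [Pi.single_apply, hb]
  · simp

lemma dd_smul (v : Fin m → S) (c : S) (P : MvPolynomial (Fin m) S) :
    dd v (c • P) = c • dd v P := by
  simp [dd, Finset.smul_sum, smul_eq_C_mul]
  ring_nf
  congr 1; ext i; ring

lemma Dop_sum {α : Type*} (B : Matrix (Fin m) (Fin m) S) (s : Finset α)
    (f : α → MvPolynomial (Fin m) S) :
    Dop B (∑ a ∈ s, f a) = ∑ a ∈ s, Dop B (f a) := by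
  simp [Dop, Finset.mul_sum]
  exact Finset.sum_comm


/-- Commutator identity: `∂_v (D_B P) = D_B (∂_v P) + ∂_{Bv} P`. -/
lemma dd_Dop (B : Matrix (Fin m) (Fin m) S) (v : Fin m → S) (P : MvPolynomial (Fin m) S) :
    dd v (Dop B P) = Dop B (dd v P) + dd (B.mulVec v) P := by
  have expand : ∀ k, pderiv k (Dop B P)
      = ∑ i, (C (B i k) * pderiv i P + lin B i * pderiv k (pderiv i P)) := by
    intro k
    rw [Dop, map_sum]
    refine Finset.sum_congr rfl fun i _ => ?_
    rw [pderiv_mul, pderiv_lin]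
  have h2nd : Dop B (dd v P)
      = ∑ k, ∑ i, C (v k) * (lin B i * pderiv k (pderiv i P)) := by
    rw [← Finset.sum_comm, Dop]
    refine Finset.sum_congr rfl fun i _ => ?_
    rw [dd, map_sum, Finset.mul_sum]
    refine Finset.sum_congr rfl fun k _ => ?_
    rw [pderiv_C_mul, pderiv_pderiv_comm]; ring
  have h1st : dd (B.mulVec v) P
      = ∑ k, ∑ i, C (v k) * (C (B i k) * pderiv i P) := by
    rw [← Finset.sum_comm, dd]
    refine Finset.sum_congr rfl fun i _ => ?_
    rw [Matrix.mulVec, dotProduct, map_sum, Finset.sum_mul]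
    refine Finset.sum_congr rfl fun k _ => ?_
    rw [map_mul]; ring
  rw [dd]
  simp_rw [expand, Finset.mul_sum, mul_add, Finset.sum_add_distrib]
  rw [h2nd, h1st, add_comm]

/-- degree of a finsupp on a fintype is the full sum. -/
lemma degE (d : Fin m →₀ ℕ) : d.degree = ∑ i, d i := by
  rw [Finsupp.degree]
  exact Finset.sum_subset (Finset.subset_univ _)
    (fun i _ hi => Finsupp.notMem_support_iff.mp hi)

lemma euler {P : MvPolynomial (Fin m) S} {n : ℕ} (h : P.IsHomogeneous n) :
    ∑ i, X i * pderiv i P = (n : S) • P := by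
  conv_lhs => rw [P.as_sum]
  simp_rw [map_sum, Finset.mul_sum]
  rw [Finset.sum_comm]
  conv_rhs => rw [P.as_sum, Finset.smul_sum]
  refine Finset.sum_congr rfl fun d hd => ?_
  have hdeg : d.degree = n := by
    rw [Finsupp.degree_eq_weight_one]; exact h (MvPolynomial.mem_support_iff.mp hd)
  have key : ∀ i, X i * pderiv i (monomial d (coeff d P))
      = monomial d (coeff d P * d i) := by
    intro i
    rw [pderiv_monomial]
    by_cases hdi : d i = 0
    · simp [hdi]
    · have hle : Finsupp.single i 1 ≤ d := by
        rw [Finsupp.single_le_iff]; omega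
      rw [X, monomial_mul, one_mul, add_tsub_cancel_of_le hle]
  simp_rw [key]
  rw [← map_sum, ← Finset.mul_sum, ← Nat.cast_sum, ← degE, hdeg]
  rw [smul_monomial, smul_eq_mul, mul_comm]


lemma deg_add (a b : Fin m →₀ ℕ) : (a + b).degree = a.degree + b.degree := by
  simp [degE, Finsupp.add_apply, Finset.sum_add_distrib]

lemma deg_single (i : Fin m) : (Finsupp.single i 1).degree = 1 := by
  rw [degE, Finset.sum_eq_single i] <;> simp [Finsupp.single_apply]
  intro b hb; simp [Ne.symm hb]

lemma pderiv_isHomogeneous {P : MvPolynomial (Fin m) S} {n : ℕ}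
    (h : P.IsHomogeneous n) (i : Fin m) : (pderiv i P).IsHomogeneous (n - 1) := by
  rw [← mem_homogeneousSubmodule, P.as_sum, map_sum]
  apply Submodule.sum_mem
  intro d hd
  have hdeg : d.degree = n := by
    rw [Finsupp.degree_eq_weight_one]; exact h (MvPolynomial.mem_support_iff.mp hd)
  rw [pderiv_monomial, mem_homogeneousSubmodule]
  by_cases hdi : d i = 0
  · rw [hdi]; simp only [Nat.cast_zero, mul_zero, map_zero]; exact isHomogeneous_zero _ _ _
  · apply isHomogeneous_monomial
    have hle : Finsupp.single i 1 ≤ d := by rw [Finsupp.single_le_iff]; omega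
    have hca : d - Finsupp.single i 1 + Finsupp.single i 1 = d := tsub_add_cancel_of_le hle
    have := congrArg Finsupp.degree hca
    rw [deg_add, deg_single] at this
    omega

lemma pderiv_eq_zero_of_homog0 {P : MvPolynomial (Fin m) S}
    (h : P.IsHomogeneous 0) (i : Fin m) : pderiv i P = 0 := by
  conv_lhs => rw [P.as_sum]
  rw [map_sum]
  apply Finset.sum_eq_zero
  intro d hd
  have hdeg : d.degree = 0 := by
    rw [Finsupp.degree_eq_weight_one]; exact h (MvPolynomial.mem_support_iff.mp hd)
  have : d = 0 := (Finsupp.degree_eq_zero_iff d).mp hdeg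
  subst this
  rw [pderiv_monomial]
  simp

lemma lin_isHomogeneous (B : Matrix (Fin m) (Fin m) S) (i : Fin m) :
    (lin B i).IsHomogeneous 1 := by
  rw [← mem_homogeneousSubmodule, lin]
  apply Submodule.sum_mem
  intro j _
  rw [mem_homogeneousSubmodule]
  exact (isHomogeneous_X S j).C_mul (B i j)

lemma Dop_isHomogeneous (B : Matrix (Fin m) (Fin m) S) {P : MvPolynomial (Fin m) S} {n : ℕ}
    (h : P.IsHomogeneous n) : (Dop B P).IsHomogeneous n := by
  cases n with
  | zero =>
    have : Dop B P = 0 := by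
      rw [Dop]; apply Finset.sum_eq_zero; intro i _
      rw [pderiv_eq_zero_of_homog0 h, mul_zero]
    rw [this]; exact isHomogeneous_zero _ _ _
  | succ n =>
    rw [← mem_homogeneousSubmodule, Dop]
    apply Submodule.sum_mem
    intro i _
    rw [mem_homogeneousSubmodule]
    have := (lin_isHomogeneous B i).mul (pderiv_isHomogeneous h i)
    rwa [Nat.succ_sub_one, Nat.add_comm] at this

lemma dd_isHomogeneous (v : Fin m → S) {P : MvPolynomial (Fin m) S} {n : ℕ}
    (h : P.IsHomogeneous n) : (dd v P).IsHomogeneous (n - 1) := by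
  rw [← mem_homogeneousSubmodule, dd]
  apply Submodule.sum_mem
  intro i _
  rw [mem_homogeneousSubmodule]
  exact (pderiv_isHomogeneous h i).C_mul (v i)

lemma homogeneousComponent_Dop (B : Matrix (Fin m) (Fin m) S) (P : MvPolynomial (Fin m) S)
    (n : ℕ) :
    homogeneousComponent n (Dop B P) = Dop B (homogeneousComponent n P) := by
  set N := P.totalDegree + n + 1 with hN
  have hPsum : P = ∑ k ∈ Finset.range N, homogeneousComponent k P := by
    have h2 : ∑ k ∈ Finset.range N, homogeneousComponent k P
        = ∑ k ∈ Finset.range (P.totalDegree + 1), homogeneousComponent k P := by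
      symm
      apply Finset.sum_subset
      · apply Finset.range_subset_range.mpr; omega
      · intro k _ hk
        exact homogeneousComponent_eq_zero _ P (by simp at hk; omega)
    rw [h2, sum_homogeneousComponent]
  have key : ∀ k, homogeneousComponent n (Dop B (homogeneousComponent k P))
      = if n = k then Dop B (homogeneousComponent k P) else 0 := by
    intro k
    apply homogeneousComponent_of_mem
    rw [mem_homogeneousSubmodule]
    exact Dop_isHomogeneous B (homogeneousComponent_isHomogeneous k P)
  conv_lhs => rw [hPsum]
  rw [Dop_sum, map_sum]
  simp_rw [key]
  rw [Finset.sum_ite_eq, if_pos (Finset.mem_range.mpr (by omega))]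

lemma map_Dop {T : Type*} [CommRing T] (f : S →+* T) (B : Matrix (Fin m) (Fin m) S)
    (P : MvPolynomial (Fin m) S) :
    map f (Dop B P) = Dop (B.map f) (map f P) := by
  rw [Dop, Dop, map_sum]
  refine Finset.sum_congr rfl fun i _ => ?_
  rw [map_mul, pderiv_map]
  congr 1
  rw [lin, lin, map_sum]
  refine Finset.sum_congr rfl fun j _ => ?_
  rw [map_mul, map_C, map_X, Matrix.map_apply]


lemma hasFDerivAt_eval (P : MvPolynomial (Fin m) ℝ) (x : Fin m → ℝ) :
    HasFDerivAt (fun y => eval y P)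
      (∑ i, eval x (pderiv i P) • (ContinuousLinearMap.proj i : (Fin m → ℝ) →L[ℝ] ℝ)) x := by
  induction P using MvPolynomial.induction_on with
  | C a =>
    have h0 : HasFDerivAt (fun _ : Fin m → ℝ => a) (0 : (Fin m → ℝ) →L[ℝ] ℝ) x := hasFDerivAt_const a x
    have e1 : (fun y : Fin m → ℝ => eval y (C a : MvPolynomial (Fin m) ℝ)) = fun _ => a := by
      funext y; simp
    have e2 : (∑ i, eval x (pderiv i (C a : MvPolynomial (Fin m) ℝ))
        • (ContinuousLinearMap.proj i : (Fin m → ℝ) →L[ℝ] ℝ)) = 0 := by simp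
    rw [e1, e2]; exact h0
  | add p q hp hq =>
    have h : HasFDerivAt (fun y : Fin m → ℝ => eval y p + eval y q) _ x := hp.add hq
    have e1 : (fun y : Fin m → ℝ => eval y p + eval y q) = fun y => eval y (p + q) := by
      funext y; simp
    have e2 : (∑ i, eval x (pderiv i (p + q))
          • (ContinuousLinearMap.proj i : (Fin m → ℝ) →L[ℝ] ℝ))
        = (∑ i, eval x (pderiv i p) • (ContinuousLinearMap.proj i : (Fin m → ℝ) →L[ℝ] ℝ))
          + ∑ i, eval x (pderiv i q) • (ContinuousLinearMap.proj i : (Fin m → ℝ) →L[ℝ] ℝ) := by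
      simp [add_smul, Finset.sum_add_distrib]
    rw [e1] at h; rw [e2]; exact h
  | mul_X p j hp =>
    classical
    have hXj := (ContinuousLinearMap.proj (R := ℝ) (φ := fun _ : Fin m => ℝ) j).hasFDerivAt
      (x := x)
    have h : HasFDerivAt (fun y : Fin m → ℝ =>
        eval y p * (ContinuousLinearMap.proj (R := ℝ) (φ := fun _ : Fin m => ℝ) j) y) _ x :=
      hp.mul hXj
    have e1 : (fun y : Fin m → ℝ =>
        eval y p * (ContinuousLinearMap.proj (R := ℝ) (φ := fun _ : Fin m => ℝ) j) y)
        = fun y => eval y (p * X j) := by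
      funext y; simp
    have hterm : ∀ i, eval x (pderiv i (p * X j))
        = eval x (pderiv i p) * x j + (if i = j then eval x p else 0) := by
      intro i
      rw [pderiv_mul]
      by_cases h : i = j
      · subst h; simp
      · simp [pderiv_X_of_ne (Ne.symm h), h]
    have e2 : (∑ i, eval x (pderiv i (p * X j))
          • (ContinuousLinearMap.proj i : (Fin m → ℝ) →L[ℝ] ℝ))
        = eval x p • (ContinuousLinearMap.proj j : (Fin m → ℝ) →L[ℝ] ℝ)
          + x j • ∑ i, eval x (pderiv i p)
            • (ContinuousLinearMap.proj i : (Fin m → ℝ) →L[ℝ] ℝ) := by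
      simp_rw [hterm, add_smul, Finset.sum_add_distrib, ite_smul, zero_smul,
        Finset.sum_ite_eq', Finset.mem_univ, if_true, mul_comm, mul_smul, ← Finset.smul_sum]
      rw [add_comm]
    rw [e1] at h; rw [e2]; exact h

lemma grad_eval (P : MvPolynomial (Fin m) ℝ) (x : Fin m → ℝ) (i : Fin m) :
    grad (fun y => eval y P) x i = eval x (pderiv i P) := by
  classical
  rw [grad, (hasFDerivAt_eval P x).fderiv]
  rw [ContinuousLinearMap.sum_apply]
  rw [Finset.sum_eq_single i]
  · simp
  · intro b _ hb
    simp [Pi.single_apply, Ne.symm hb]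
  · simp


lemma Dop_zero (B : Matrix (Fin m) (Fin m) S) : Dop B (0 : MvPolynomial (Fin m) S) = 0 := by
  simp [Dop]

lemma isRoot_charpoly_of_eigen (M : Matrix (Fin m) (Fin m) ℂ) {a : ℂ} {u : Fin m → ℂ}
    (hu : u ≠ 0) (h : M.mulVec u = a • u) : M.charpoly.IsRoot a := by
  have hdet : (a • (1 : Matrix (Fin m) (Fin m) ℂ) - M).det = 0 := by
    rw [← Matrix.exists_mulVec_eq_zero_iff]
    refine ⟨u, hu, ?_⟩
    rw [Matrix.sub_mulVec, Matrix.smul_mulVec, Matrix.one_mulVec, h, sub_self]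
  have h2 : (Matrix.charmatrix M).map (Polynomial.evalRingHom a)
      = a • (1 : Matrix (Fin m) (Fin m) ℂ) - M := by
    ext i j
    by_cases hij : i = j
    · subst hij
      simp [Matrix.charmatrix_apply_eq, Matrix.map_apply, Matrix.smul_apply, Matrix.one_apply,
        Matrix.sub_apply]
    · simp [Matrix.charmatrix_apply_ne _ _ _ hij, Matrix.map_apply, Matrix.smul_apply,
        Matrix.one_apply, Matrix.sub_apply, hij]
  have h3 := RingHom.map_det (Polynomial.evalRingHom a) (Matrix.charmatrix M)
  rw [RingHom.mapMatrix_apply, h2, hdet] at h3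
  rw [Polynomial.IsRoot, Matrix.charpoly]
  simpa using h3

lemma descent (B : Matrix (Fin m) (Fin m) ℂ)
    (hroots : ∀ a : ℂ, B.charpoly.IsRoot a → 0 < a.re) :
    ∀ (d : ℕ) (Q : MvPolynomial (Fin m) ℂ) (μ : ℂ), Q ≠ 0 → Q.IsHomogeneous d →
      Dop B Q = μ • Q → 0 ≤ μ.re := by
  intro d
  induction d with
  | zero =>
    intro Q μ hQ hhom hD
    have hz : Dop B Q = 0 := by
      rw [Dop]
      exact Finset.sum_eq_zero fun i _ => by rw [pderiv_eq_zero_of_homog0 hhom, mul_zero]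
    rw [hz] at hD
    rcases smul_eq_zero.mp hD.symm with h | h
    · simp [h]
    · exact absurd h hQ
  | succ d ih =>
    intro Q μ hQ hhom hD
    classical
    set Φ : (Fin m → ℂ) →ₗ[ℂ] MvPolynomial (Fin m) ℂ :=
      { toFun := fun v => dd v Q
        map_add' := by
          intro v w
          show dd (v + w) Q = dd v Q + dd w Q
          rw [dd, dd, dd, ← Finset.sum_add_distrib]
          exact Finset.sum_congr rfl fun i _ => by rw [Pi.add_apply, map_add, add_mul]
        map_smul' := by
          intro c v
          show dd (c • v) Q = c • dd v Q
          rw [dd, dd, Finset.smul_sum]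
          refine Finset.sum_congr rfl fun i _ => ?_
          rw [Pi.smul_apply, smul_eq_mul, map_mul, smul_eq_C_mul, mul_assoc] } with hPhi
    have hPhiApp : ∀ v, Φ v = dd v Q := fun v => rfl
    set K := LinearMap.ker Φ with hK
    have hKt : K ≠ ⊤ := by
      intro htop
      have hall : ∀ i, pderiv i Q = 0 := by
        intro i
        have hmem : Pi.single i (1 : ℂ) ∈ K := htop ▸ Submodule.mem_top
        have h0 : dd (Pi.single i 1) Q = 0 := LinearMap.mem_ker.mp hmem
        rwa [dd_single] at h0
      have he := euler hhom
      rw [Finset.sum_eq_zero (fun i _ => by rw [hall i, mul_zero])] at he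
      have hc : ((d + 1 : ℕ) : ℂ) ≠ 0 := Nat.cast_ne_zero.mpr (Nat.succ_ne_zero d)
      rcases smul_eq_zero.mp he.symm with h | h
      · exact hc h
      · exact hQ h
    let f : Module.End ℂ (Fin m → ℂ) := Matrix.mulVecLin B
    have hfApp : ∀ v, f v = B.mulVec v := fun v => rfl
    have hinv : ∀ v ∈ K, f v ∈ K := by
      intro v hv
      have hv0 : dd v Q = 0 := LinearMap.mem_ker.mp hv
      have hcomm := dd_Dop B v Q
      rw [hD, dd_smul, hv0, smul_zero, Dop_zero, zero_add] at hcomm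
      exact LinearMap.mem_ker.mpr (by rw [hPhiApp, hfApp, ← hcomm])
    have hle : K ≤ K.comap f := fun v hv => hinv v hv
    have hlt : K < ⊤ := lt_top_iff_ne_top.mpr hKt
    haveI : Nontrivial ((Fin m → ℂ) ⧸ K) := Submodule.Quotient.nontrivial_iff.mpr hlt.ne
    obtain ⟨a, ha⟩ := Module.End.exists_eigenvalue (Submodule.mapQ K K f hle)
    obtain ⟨w, hw⟩ := ha.exists_hasEigenvector
    obtain ⟨v, hv⟩ := Submodule.mkQ_surjective K w
    have hvK : v ∉ K := by
      intro hmem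
      exact hw.2 (by rw [← hv, Submodule.mkQ_apply, Submodule.Quotient.mk_eq_zero K]; exact hmem)
    have heig : f v - a • v ∈ K := by
      have h1 : (Submodule.mapQ K K f hle) (K.mkQ v) = K.mkQ (f v) := by
        simp only [Submodule.mkQ_apply, Submodule.mapQ_apply]
      have h2 : K.mkQ (f v) = a • K.mkQ v := by rw [← h1, hv, hw.apply_eq_smul, ← hv]
      have h3 : K.mkQ (f v - a • v) = 0 := by rw [map_sub, map_smul, h2, sub_self]
      rwa [← LinearMap.mem_ker, Submodule.ker_mkQ] at h3
    -- `a` is a root of the characteristic polynomial of `B`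
    have hroot : B.charpoly.IsRoot a := by
      set g : Module.End ℂ (Fin m → ℂ) := f - a • LinearMap.id with hg
      have hgApp : ∀ x, g x = f x - a • x := fun x => rfl
      have hgle : K ≤ K.comap g := fun x hx =>
        K.sub_mem (hinv x hx) (K.smul_mem a hx)
      have hns : ¬Function.Surjective g := by
        intro hsurj
        have hsurjbar : Function.Surjective (Submodule.mapQ K K g hgle) := by
          intro y
          obtain ⟨y', rfl⟩ := Submodule.mkQ_surjective K y
          obtain ⟨x, hx⟩ := hsurj y'
          exact ⟨K.mkQ x, by simp only [Submodule.mkQ_apply, Submodule.mapQ_apply]; rw [hx]⟩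
        have hinj : Function.Injective (Submodule.mapQ K K g hgle) :=
          LinearMap.injective_iff_surjective.mpr hsurjbar
        apply hw.2
        apply hinj
        rw [map_zero, ← hv]
        simp only [Submodule.mkQ_apply, Submodule.mapQ_apply]
        rw [Submodule.Quotient.mk_eq_zero]
        exact heig
      have hni : ¬Function.Injective g := fun hinj =>
        hns (LinearMap.injective_iff_surjective.mp hinj)
      have hker : LinearMap.ker g ≠ ⊥ := fun hbot => hni (LinearMap.ker_eq_bot.mp hbot)
      obtain ⟨uu, hu_mem, hu0⟩ := Submodule.exists_mem_ne_zero_of_ne_bot hker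
      have hgu : g uu = 0 := LinearMap.mem_ker.mp hu_mem
      have heq : B.mulVec uu = a • uu := by
        have h4 := hgApp uu
        rw [hgu] at h4
        have h5 : f uu = a • uu := by
          have := sub_eq_zero.mp h4.symm
          exact this
        rw [← hfApp uu]
        exact h5
      exact isRoot_charpoly_of_eigen B hu0 heq
    have hre : 0 < a.re := hroots a hroot
    have hQ'0 : dd v Q ≠ 0 := fun h0 => hvK (LinearMap.mem_ker.mpr (by rw [hPhiApp]; exact h0))
    have hQ'hom : (dd v Q).IsHomogeneous d := by
      have := dd_isHomogeneous v hhom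
      simpa using this
    have hddBv : dd (B.mulVec v) Q = a • dd v Q := by
      have h0 : Φ (f v - a • v) = 0 := LinearMap.mem_ker.mp heig
      rw [map_sub, map_smul] at h0
      have h1 : Φ (f v) = a • Φ v := by rwa [sub_eq_zero] at h0
      exact h1
    have hDQ' : Dop B (dd v Q) = (μ - a) • dd v Q := by
      have hcomm := dd_Dop B v Q
      rw [hD, dd_smul, hddBv] at hcomm
      have := eq_sub_of_add_eq hcomm.symm
      rw [this, sub_smul]
    have hfin := ih (dd v Q) (μ - a) hQ'0 hQ'hom hDQ'
    have : 0 ≤ μ.re - a.re := by simpa [Complex.sub_re] using hfin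
    linarith

end Stmt2Aux


open Stmt2Aux in
/-- homogeneous case of the paper's Lemma 3.1: if all roots of the
characteristic polynomial of `A` are real and strictly positive, `λ > 0`, and the
polynomial function `u` satisfies `λ·u(x) + ⟨A x, ∇u(x)⟩ = 0` for all `x`, then `u ≡ 0`. -/
theorem stmt2 (m : ℕ) (hm : 1 ≤ m) (A : Matrix (Fin m) (Fin m) ℝ)
    (hA : ∀ z ∈ (Polynomial.map (algebraMap ℝ ℂ) A.charpoly).roots, z.im = 0 ∧ 0 < z.re)
    (lam : ℝ) (hlam : 0 < lam) (u : (Fin m → ℝ) → ℝ) (hu : IsPolyFun u)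
    (heq : ∀ x, lam * u x + ∑ i, A.mulVec x i * grad u x i = 0) :
    ∀ x, u x = 0 := by
  classical
  obtain ⟨P, hP⟩ := hu
  have hueq : u = fun y => eval y P := funext hP
  have hPid : C lam * P + Dop A P = 0 := by
    apply MvPolynomial.funext
    intro x
    rw [map_add, map_mul, eval_C, map_zero]
    have hDx : eval x (Dop A P) = ∑ i, A.mulVec x i * grad u x i := by
      rw [Dop, map_sum]
      refine Finset.sum_congr rfl fun i _ => ?_
      rw [map_mul]
      congr 1
      · rw [lin, map_sum]
        simp [Matrix.mulVec, dotProduct]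
      · rw [hueq, grad_eval]
    rw [hDx, ← hP x]
    exact heq x
  set φ := algebraMap ℝ ℂ with hφ
  set Pc := MvPolynomial.map φ P with hPcdef
  have hPidc : C (φ lam) * Pc + Dop (A.map φ) Pc = 0 := by
    have h := congrArg (MvPolynomial.map φ) hPid
    rw [map_add, map_mul, MvPolynomial.map_C, map_Dop, map_zero] at h
    exact h
  have hroots : ∀ a : ℂ, (A.map φ).charpoly.IsRoot a → 0 < a.re := by
    intro a ha
    have hmem : a ∈ (Polynomial.map φ A.charpoly).roots := by
      rw [Polynomial.mem_roots']
      exact ⟨(A.charpoly_monic.map φ).ne_zero, by rw [← Matrix.charpoly_map]; exact ha⟩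
    exact (hA a hmem).2
  have hP0 : P = 0 := by
    by_contra hne
    have hPc0 : Pc ≠ 0 := fun h =>
      hne (MvPolynomial.map_injective φ φ.injective (by rw [← hPcdef, h, map_zero]))
    obtain ⟨d, hd⟩ : ∃ d, homogeneousComponent d Pc ≠ 0 := by
      by_contra hall
      push_neg at hall
      apply hPc0
      rw [← sum_homogeneousComponent Pc]
      exact Finset.sum_eq_zero fun k _ => hall k
    have hcomp := congrArg (homogeneousComponent d) hPidc
    rw [map_add, homogeneousComponent_C_mul, homogeneousComponent_Dop, map_zero] at hcomp
    have hDQd : Dop (A.map φ) (homogeneousComponent d Pc)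
        = (-(φ lam)) • homogeneousComponent d Pc := by
      rw [smul_eq_C_mul, map_neg, neg_mul]
      exact eq_neg_of_add_eq_zero_right (by rw [add_comm] at hcomp; rw [add_comm]; exact hcomp)
    have hdes := descent (A.map φ) hroots d (homogeneousComponent d Pc) (-(φ lam)) hd
      (homogeneousComponent_isHomogeneous d Pc) hDQd
    have hre : (0:ℝ) ≤ -lam := by
      simpa [hφ, Complex.neg_re, Complex.ofReal_re] using hdes
    linarith
  intro x
  rw [hP x, hP0, map_zero]
end

section
/- Let d ≥ 1 and let P : ℝ^d × ℝ^d → ℝ be a polynomial function such that P(ξ,y) − ⟨ξ + y, ∇_ξP(ξ,y)⟩ + ⟨6ξ + 4y, ∇_yP(ξ,y)⟩ = 0 for all ξ, y ∈ ℝ^d. Then P is identically zero. -/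
/-- `i`-th component of the gradient of `P(ξ,y)` with respect to `ξ`. -/
noncomputable def gradFst {d : ℕ} (P : (Fin d → ℝ) → (Fin d → ℝ) → ℝ)
    (ξ y : Fin d → ℝ) (i : Fin d) : ℝ :=
  fderiv ℝ (fun ξ' => P ξ' y) ξ (Pi.single i 1)

/-- `i`-th component of the gradient of `P(ξ,y)` with respect to `y`. -/
noncomputable def gradSnd {d : ℕ} (P : (Fin d → ℝ) → (Fin d → ℝ) → ℝ)
    (ξ y : Fin d → ℝ) (i : Fin d) : ℝ :=
  fderiv ℝ (fun y' => P ξ y') y (Pi.single i 1)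

/-- `P : ℝ^d × ℝ^d → ℝ` is a polynomial function: it is given by a multivariate real
polynomial in the coordinates of `ξ` and `y`. -/
def IsPolyFun2 {d : ℕ} (P : (Fin d → ℝ) → (Fin d → ℝ) → ℝ) : Prop :=
  ∃ Q : MvPolynomial (Fin d ⊕ Fin d) ℝ, ∀ ξ y, P ξ y = MvPolynomial.eval (Sum.elim ξ y) Q

open MvPolynomial Real Filter

lemma mvpoly_diff {σ : Type*} [Fintype σ] (Q : MvPolynomial σ ℝ) :
    Differentiable ℝ (fun x : σ → ℝ => MvPolynomial.eval x Q) := by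
  induction Q using MvPolynomial.induction_on with
  | C a => simpa using differentiable_const a
  | add p q hp hq => simp only [map_add]; exact hp.add hq
  | mul_X p i hp =>
      simp only [map_mul, eval_X]; exact
        hp.mul ((ContinuousLinearMap.proj i : (σ → ℝ) →L[ℝ] ℝ).differentiable)

lemma clm_apply_eq_sum {ι : Type*} [Fintype ι] [DecidableEq ι]
    (L : (ι → ℝ) →L[ℝ] ℝ) (v : ι → ℝ) :
    L v = ∑ j, v j * L (Pi.single j 1) := by
  conv_lhs => rw [pi_eq_sum_univ v]
  rw [map_sum]
  refine Finset.sum_congr rfl fun j _ => ?_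
  rw [ContinuousLinearMap.map_smul, smul_eq_mul]
  congr 2
  ext k
  simp [Pi.single_apply, eq_comm]


/-- inclusion ξ' ↦ Sum.elim ξ' 0 as a CLM -/
noncomputable def linL (d : ℕ) : (Fin d → ℝ) →L[ℝ] (Fin d ⊕ Fin d → ℝ) :=
  ContinuousLinearMap.pi (Sum.elim (fun i => ContinuousLinearMap.proj i) (fun _ => 0))

noncomputable def linR (d : ℕ) : (Fin d → ℝ) →L[ℝ] (Fin d ⊕ Fin d → ℝ) :=
  ContinuousLinearMap.pi (Sum.elim (fun _ => 0) (fun i => ContinuousLinearMap.proj i))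

lemma gradFst_eq {d : ℕ} (Q : MvPolynomial (Fin d ⊕ Fin d) ℝ) (ξ y : Fin d → ℝ) (i : Fin d) :
    gradFst (fun a b => MvPolynomial.eval (Sum.elim a b) Q) ξ y i
      = fderiv ℝ (fun z => MvPolynomial.eval z Q) (Sum.elim ξ y) (Pi.single (Sum.inl i) 1) := by
  have hι : HasFDerivAt (fun ξ' : Fin d → ℝ => Sum.elim ξ' y) (linL d) ξ := by
    have h : (fun ξ' : Fin d → ℝ => Sum.elim ξ' y)
        = fun ξ' => linL d ξ' + Sum.elim (0 : Fin d → ℝ) y := by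
      funext ξ' j
      cases j <;> simp [linL]
    rw [h]
    exact (linL d).hasFDerivAt.add_const _
  have hcomp : HasFDerivAt (fun ξ' => MvPolynomial.eval (Sum.elim ξ' y) Q)
      ((fderiv ℝ (fun z => MvPolynomial.eval z Q) (Sum.elim ξ y)).comp (linL d)) ξ :=
    by have h := ((mvpoly_diff Q (Sum.elim ξ y)).hasFDerivAt).comp ξ hι; exact h
  rw [gradFst, hcomp.fderiv]
  simp only [ContinuousLinearMap.coe_comp', Function.comp_apply]
  congr 1
  funext j
  cases j <;> simp [linL, Pi.single_apply]

lemma gradSnd_eq {d : ℕ} (Q : MvPolynomial (Fin d ⊕ Fin d) ℝ) (ξ y : Fin d → ℝ) (i : Fin d) :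
    gradSnd (fun a b => MvPolynomial.eval (Sum.elim a b) Q) ξ y i
      = fderiv ℝ (fun z => MvPolynomial.eval z Q) (Sum.elim ξ y) (Pi.single (Sum.inr i) 1) := by
  have hι : HasFDerivAt (fun y' : Fin d → ℝ => Sum.elim ξ y') (linR d) y := by
    have h : (fun y' : Fin d → ℝ => Sum.elim ξ y')
        = fun y' => linR d y' + Sum.elim ξ (0 : Fin d → ℝ) := by
      funext y' j
      cases j <;> simp [linR]
    rw [h]
    exact (linR d).hasFDerivAt.add_const _
  have hcomp : HasFDerivAt (fun y' => MvPolynomial.eval (Sum.elim ξ y') Q)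
      ((fderiv ℝ (fun z => MvPolynomial.eval z Q) (Sum.elim ξ y)).comp (linR d)) y :=
    ((mvpoly_diff Q (Sum.elim ξ y)).hasFDerivAt).comp y hι
  rw [gradSnd, hcomp.fderiv]
  simp only [ContinuousLinearMap.coe_comp', Function.comp_apply]
  congr 1
  funext j
  cases j <;> simp [linR, Pi.single_apply]


/-- paper, Proposition 3.4: a polynomial function `P` with
`P − ⟨ξ + y, ∇_ξP⟩ + ⟨6ξ + 4y, ∇_yP⟩ = 0` everywhere vanishes identically. -/
theorem stmt3 (d : ℕ) (hd : 1 ≤ d) (P : (Fin d → ℝ) → (Fin d → ℝ) → ℝ)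
    (hP : IsPolyFun2 P)
    (heq : ∀ ξ y, P ξ y - ∑ i, (ξ i + y i) * gradFst P ξ y i
        + ∑ i, (6 * ξ i + 4 * y i) * gradSnd P ξ y i = 0) :
    ∀ ξ y, P ξ y = 0 := by
  obtain ⟨Q, hQ⟩ := hP
  have hPfun : P = fun a b => MvPolynomial.eval (Sum.elim a b) Q := by
    funext a b; exact hQ a b
  subst hPfun
  set f : (Fin d ⊕ Fin d → ℝ) → ℝ := fun z => MvPolynomial.eval z Q with hf_def
  have hf : Differentiable ℝ f := mvpoly_diff Q
  -- key pointwise identity: f z = Df z (A z)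
  have key : ∀ z : Fin d ⊕ Fin d → ℝ, ∀ v : Fin d ⊕ Fin d → ℝ,
      (∀ i, v (Sum.inl i) = z (Sum.inl i) + z (Sum.inr i)) →
      (∀ i, v (Sum.inr i) = -6 * z (Sum.inl i) - 4 * z (Sum.inr i)) →
      fderiv ℝ f z v = f z := by
    intro z v hvl hvr
    set ξt : Fin d → ℝ := fun i => z (Sum.inl i)
    set yt : Fin d → ℝ := fun i => z (Sum.inr i)
    have hz : Sum.elim ξt yt = z := by funext j; cases j <;> rfl
    have h0 := heq ξt yt
    rw [clm_apply_eq_sum, Fintype.sum_sum_type]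
    have h1 : ∀ i, gradFst (fun a b => MvPolynomial.eval (Sum.elim a b) Q) ξt yt i
        = fderiv ℝ f z (Pi.single (Sum.inl i) 1) := by
      intro i; rw [gradFst_eq, hz]
    have h2 : ∀ i, gradSnd (fun a b => MvPolynomial.eval (Sum.elim a b) Q) ξt yt i
        = fderiv ℝ f z (Pi.single (Sum.inr i) 1) := by
      intro i; rw [gradSnd_eq, hz]
    simp only [h1, h2] at h0
    rw [hz] at h0
    have e1 : ∑ i, v (Sum.inl i) * fderiv ℝ f z (Pi.single (Sum.inl i) 1)
        = ∑ i, (ξt i + yt i) * fderiv ℝ f z (Pi.single (Sum.inl i) 1) :=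
      Finset.sum_congr rfl fun i _ => by rw [hvl i]
    have e2 : ∑ i, v (Sum.inr i) * fderiv ℝ f z (Pi.single (Sum.inr i) 1)
        = -∑ i, (6 * ξt i + 4 * yt i) * fderiv ℝ f z (Pi.single (Sum.inr i) 1) := by
      rw [← Finset.sum_neg_distrib]
      exact Finset.sum_congr rfl fun i _ => by rw [hvr i]; ring
    rw [e1, e2]
    linarith
  intro ξ y
  -- the flow
  set a : Fin d → ℝ := fun i => 3 * ξ i + y i with ha
  set b : Fin d → ℝ := fun i => -2 * ξ i - y i with hb
  set c : ℝ → (Fin d ⊕ Fin d → ℝ) := fun t =>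
    Sum.elim (fun i => a i * Real.exp (-t) + b i * Real.exp (-2 * t))
      (fun i => -2 * a i * Real.exp (-t) - 3 * b i * Real.exp (-2 * t)) with hc_def
  set c' : ℝ → (Fin d ⊕ Fin d → ℝ) := fun t =>
    Sum.elim (fun i => -(a i) * Real.exp (-t) - 2 * b i * Real.exp (-2 * t))
      (fun i => 2 * a i * Real.exp (-t) + 6 * b i * Real.exp (-2 * t)) with hc'_def
  have hexp1 : ∀ t : ℝ, HasDerivAt (fun t => Real.exp (-t)) (-Real.exp (-t)) t := by
    intro t
    have := (hasDerivAt_neg t).exp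
    simpa [mul_comm] using this
  have hexp2 : ∀ t : ℝ, HasDerivAt (fun t => Real.exp (-2 * t)) (-2 * Real.exp (-2 * t)) t := by
    intro t
    have h : HasDerivAt (fun t : ℝ => -2 * t) (-2) t := by
      simpa using (hasDerivAt_id t).const_mul (-2 : ℝ)
    simpa [mul_comm] using h.exp
  have hc : ∀ t, HasDerivAt c (c' t) t := by
    intro t
    rw [hasDerivAt_pi]
    intro j
    cases j with
    | inl i =>
        have := ((hexp1 t).const_mul (a i)).add ((hexp2 t).const_mul (b i))
        convert this using 1
        · rfl
        simp only [hc'_def, Sum.elim_inl]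
        ring
    | inr i =>
        have := (((hexp1 t).const_mul (-2 * a i))).sub ((hexp2 t).const_mul (3 * b i))
        convert this using 1
        · rfl
        simp only [hc'_def, Sum.elim_inr]
        ring
  have hfc : ∀ t, HasDerivAt (fun t => f (c t)) (f (c t)) t := by
    intro t
    have h := (hf (c t)).hasFDerivAt.comp_hasDerivAt t (hc t)
    have hk : fderiv ℝ f (c t) (c' t) = f (c t) := by
      apply key
      · intro i; show -(a i) * Real.exp (-t) - 2 * b i * Real.exp (-2*t) = _; simp only [hc_def, Sum.elim_inl, Sum.elim_inr]; ring
      · intro i; show 2 * a i * Real.exp (-t) + 6 * b i * Real.exp (-2*t) = _; simp only [hc_def, Sum.elim_inl, Sum.elim_inr]; ring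
    rwa [hk] at h
  set g : ℝ → ℝ := fun t => Real.exp (-t) * f (c t) with hg_def
  have hg : ∀ t, HasDerivAt g 0 t := by
    intro t
    have := (hexp1 t).mul (hfc t)
    convert this using 1
    case e'_8 => rfl
    case e'_9 => ring
    all_goals rfl
  have hgconst : ∀ t, g t = g 0 := by
    intro t
    exact is_const_of_deriv_eq_zero (fun x => (hg x).differentiableAt)
      (fun x => (hg x).deriv) t 0
  have hc0 : Filter.Tendsto c atTop (nhds 0) := by
    rw [tendsto_pi_nhds]
    intro j
    have he1 : Filter.Tendsto (fun t : ℝ => Real.exp (-t)) atTop (nhds 0) :=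
      Real.tendsto_exp_neg_atTop_nhds_zero
    have hlin : Filter.Tendsto (fun t : ℝ => -2 * t) atTop atBot := by
      have h2 : Filter.Tendsto (fun t : ℝ => 2 * t) atTop atTop :=
        Filter.tendsto_id.const_mul_atTop two_pos
      have h3 := Filter.tendsto_neg_atTop_atBot.comp h2
      refine h3.congr fun x => ?_
      simp [Function.comp, neg_mul]
    have he2 : Filter.Tendsto (fun t : ℝ => Real.exp (-2 * t)) atTop (nhds 0) := by
      have := Real.tendsto_exp_atBot.comp hlin
      exact this.congr fun x => rfl
    cases j with
    | inl i =>
        have := ((he1.const_mul (a i)).add (he2.const_mul (b i)))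
        show Filter.Tendsto (fun t => a i * Real.exp (-t) + b i * Real.exp (-2 * t)) atTop (nhds (0:ℝ))
        simpa using this
    | inr i =>
        have := ((he1.const_mul (-2 * a i)).sub (he2.const_mul (3 * b i)))
        show Filter.Tendsto (fun t => -2 * a i * Real.exp (-t) - 3 * b i * Real.exp (-2 * t)) atTop (nhds (0:ℝ))
        simpa [mul_assoc] using this
  have hgt : Filter.Tendsto g atTop (nhds 0) := by
    have h1 : Filter.Tendsto (fun t => f (c t)) atTop (nhds (f 0)) :=
      (hf.continuous.continuousAt.tendsto).comp hc0
    have := Real.tendsto_exp_neg_atTop_nhds_zero.mul h1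
    simpa using this
  have hgt' : Filter.Tendsto g atTop (nhds (g 0)) := by
    have : g = fun _ => g 0 := funext hgconst
    rw [this]; exact tendsto_const_nhds
  have hg0 : g 0 = 0 := tendsto_nhds_unique hgt' hgt
  have hc00 : c 0 = Sum.elim ξ y := by
    funext j
    cases j with
    | inl i => simp only [hc_def, Sum.elim_inl, ha, hb]; norm_num [Real.exp_zero]; ring
    | inr i => simp only [hc_def, Sum.elim_inr, ha, hb]; norm_num [Real.exp_zero]; ring
  have : g 0 = f (Sum.elim ξ y) := by
    simp only [hg_def, hc00]
    norm_num [Real.exp_zero]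
  rw [this] at hg0
  exact hg0
end

section
/- Let d ≥ 1 and let P : ℝ^d × ℝ^d → ℝ be a polynomial function with P(0,0) = 0 such that −⟨ξ + y, ∇_ξP(ξ,y)⟩ + ⟨6ξ + 4y, ∇_yP(ξ,y)⟩ = 0 for all ξ, y ∈ ℝ^d. Then P is identically zero. -/
lemma stmt4_eval_differentiable {d : ℕ} (Q : MvPolynomial (Fin d ⊕ Fin d) ℝ) :
    Differentiable ℝ
      (fun p : (Fin d → ℝ) × (Fin d → ℝ) => MvPolynomial.eval (Sum.elim p.1 p.2) Q) := by
  intro p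
  have h := AnalyticAt.aeval_mvPolynomial (𝕜 := ℝ)
      (f := fun p : (Fin d → ℝ) × (Fin d → ℝ) => Sum.elim p.1 p.2) (z := p) ?_ Q
  · have he : (fun p : (Fin d → ℝ) × (Fin d → ℝ) => (MvPolynomial.aeval (Sum.elim p.1 p.2)) Q)
        = fun p : (Fin d → ℝ) × (Fin d → ℝ) => MvPolynomial.eval (Sum.elim p.1 p.2) Q := by
      funext p; rw [← MvPolynomial.coe_aeval_eq_eval]; rfl
    rw [he] at h
    exact h.differentiableAt
  · intro j
    cases j with
    | inl i =>
      exact ((ContinuousLinearMap.proj i).comp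
        (ContinuousLinearMap.fst ℝ (Fin d → ℝ) (Fin d → ℝ))).analyticAt p
    | inr i =>
      exact ((ContinuousLinearMap.proj i).comp
        (ContinuousLinearMap.snd ℝ (Fin d → ℝ) (Fin d → ℝ))).analyticAt p

lemma stmt4_pair_decomp {d : ℕ} (L : ((Fin d → ℝ) × (Fin d → ℝ)) →L[ℝ] ℝ) (a b : Fin d → ℝ) :
    L (a, b) = ∑ i, a i * L (Pi.single i 1, 0) + ∑ i, b i * L (0, Pi.single i 1) := by
  have h : (a, b) = (∑ i, a i • ((Pi.single i 1 : Fin d → ℝ), (0 : Fin d → ℝ)))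
      + ∑ i, b i • ((0 : Fin d → ℝ), (Pi.single i 1 : Fin d → ℝ)) := by
    apply Prod.ext <;>
      simp [Prod.fst_sum, Prod.snd_sum, Finset.sum_apply, Pi.single_apply, funext_iff]
  rw [h, map_add, map_sum, map_sum]
  simp only [map_smul, smul_eq_mul]

lemma stmt4_gradFst_eq {d : ℕ} (P : (Fin d → ℝ) → (Fin d → ℝ) → ℝ)
    (hG : Differentiable ℝ (fun p : (Fin d → ℝ) × (Fin d → ℝ) => P p.1 p.2))
    (ξ y : Fin d → ℝ) (i : Fin d) :
    gradFst P ξ y i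
      = fderiv ℝ (fun p : (Fin d → ℝ) × (Fin d → ℝ) => P p.1 p.2) (ξ, y) (Pi.single i 1, 0) := by
  have h1 : HasFDerivAt (fun ξ' : Fin d → ℝ => (ξ', y))
      (ContinuousLinearMap.inl ℝ (Fin d → ℝ) (Fin d → ℝ)) ξ := hasFDerivAt_prodMk_left ξ y
  have h2 := ((hG (ξ, y)).hasFDerivAt).comp ξ h1
  have h3 : (fun ξ' : Fin d → ℝ => P ξ' y)
      = (fun p : (Fin d → ℝ) × (Fin d → ℝ) => P p.1 p.2) ∘ (fun ξ' => (ξ', y)) := rfl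
  rw [gradFst, h3, h2.fderiv]
  rfl

lemma stmt4_gradSnd_eq {d : ℕ} (P : (Fin d → ℝ) → (Fin d → ℝ) → ℝ)
    (hG : Differentiable ℝ (fun p : (Fin d → ℝ) × (Fin d → ℝ) => P p.1 p.2))
    (ξ y : Fin d → ℝ) (i : Fin d) :
    gradSnd P ξ y i
      = fderiv ℝ (fun p : (Fin d → ℝ) × (Fin d → ℝ) => P p.1 p.2) (ξ, y) (0, Pi.single i 1) := by
  have h1 : HasFDerivAt (fun y' : Fin d → ℝ => (ξ, y'))
      (ContinuousLinearMap.inr ℝ (Fin d → ℝ) (Fin d → ℝ)) y := hasFDerivAt_prodMk_right ξ y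
  have h2 := ((hG (ξ, y)).hasFDerivAt).comp y h1
  have h3 : (fun y' : Fin d → ℝ => P ξ y')
      = (fun p : (Fin d → ℝ) × (Fin d → ℝ) => P p.1 p.2) ∘ (fun y' => (ξ, y')) := rfl
  rw [gradSnd, h3, h2.fderiv]
  rfl

/-- paper, proof of Proposition 3.1: a polynomial function `P` with
`P(0,0) = 0` and `−⟨ξ + y, ∇_ξP⟩ + ⟨6ξ + 4y, ∇_yP⟩ = 0` everywhere vanishes identically. -/
theorem stmt4 (d : ℕ) (hd : 1 ≤ d) (P : (Fin d → ℝ) → (Fin d → ℝ) → ℝ)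
    (hP : IsPolyFun2 P) (hP0 : P 0 0 = 0)
    (heq : ∀ ξ y, -∑ i, (ξ i + y i) * gradFst P ξ y i
        + ∑ i, (6 * ξ i + 4 * y i) * gradSnd P ξ y i = 0) :
    ∀ ξ y, P ξ y = 0 := by
  obtain ⟨Q, hQ⟩ := hP
  have hPfun : (fun p : (Fin d → ℝ) × (Fin d → ℝ) => P p.1 p.2)
      = fun p : (Fin d → ℝ) × (Fin d → ℝ) => MvPolynomial.eval (Sum.elim p.1 p.2) Q :=
    funext fun p => hQ p.1 p.2
  set G : (Fin d → ℝ) × (Fin d → ℝ) → ℝ :=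
    fun p => MvPolynomial.eval (Sum.elim p.1 p.2) Q with hGdef
  have hG : Differentiable ℝ G := stmt4_eval_differentiable Q
  have hGP : Differentiable ℝ (fun p : (Fin d → ℝ) × (Fin d → ℝ) => P p.1 p.2) := by
    rw [hPfun]; exact hG
  intro ξ y
  set u : Fin d → ℝ := fun i => 3 * ξ i + y i with hu
  set v : Fin d → ℝ := fun i => 2 * ξ i + y i with hv
  set A : ℝ → Fin d → ℝ := fun s i => s * u i - s ^ 2 * v i with hA
  set Bf : ℝ → Fin d → ℝ := fun s i => 3 * s ^ 2 * v i - 2 * s * u i with hB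
  set q : ℝ → ℝ := fun s => P (A s) (Bf s) with hq
  have key : ∀ s : ℝ, ∃ D : ℝ, HasDerivAt q D s ∧ s * D = 0 := by
    intro s
    have hA' : HasDerivAt A (fun i => u i - 2 * s * v i) s := by
      rw [hasDerivAt_pi]
      intro i
      have h := ((hasDerivAt_id s).mul_const (u i)).sub ((hasDerivAt_pow 2 s).mul_const (v i))
      convert h using 1
      · rfl
      ring
    have hB' : HasDerivAt Bf (fun i => 6 * s * v i - 2 * u i) s := by
      rw [hasDerivAt_pi]
      intro i
      have h := (((hasDerivAt_pow 2 s).const_mul 3).mul_const (v i)).sub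
        (((hasDerivAt_id s).const_mul 2).mul_const (u i))
      convert h using 1
      · rfl
      ring
    have hc : HasDerivAt (fun s' => (A s', Bf s'))
        ((fun i => u i - 2 * s * v i), (fun i => 6 * s * v i - 2 * u i)) s := hA'.prodMk hB'
    have hqd : HasDerivAt q
        (fderiv ℝ (fun p : (Fin d → ℝ) × (Fin d → ℝ) => P p.1 p.2) (A s, Bf s)
          ((fun i => u i - 2 * s * v i), (fun i => 6 * s * v i - 2 * u i))) s := by
      have := ((hGP (A s, Bf s)).hasFDerivAt).comp_hasDerivAt s hc
      exact this
    refine ⟨_, hqd, ?_⟩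
    rw [stmt4_pair_decomp]
    have hgF : ∀ i, fderiv ℝ (fun p : (Fin d → ℝ) × (Fin d → ℝ) => P p.1 p.2) (A s, Bf s)
        (Pi.single i 1, 0) = gradFst P (A s) (Bf s) i :=
      fun i => (stmt4_gradFst_eq P hGP (A s) (Bf s) i).symm
    have hgS : ∀ i, fderiv ℝ (fun p : (Fin d → ℝ) × (Fin d → ℝ) => P p.1 p.2) (A s, Bf s)
        (0, Pi.single i 1) = gradSnd P (A s) (Bf s) i :=
      fun i => (stmt4_gradSnd_eq P hGP (A s) (Bf s) i).symm
    simp only [hgF, hgS]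
    have h0 := heq (A s) (Bf s)
    have e1 : ∑ i, s * ((u i - 2 * s * v i) * gradFst P (A s) (Bf s) i)
        = -∑ i, (A s i + Bf s i) * gradFst P (A s) (Bf s) i := by
      rw [← Finset.sum_neg_distrib]
      refine Finset.sum_congr rfl fun i _ => ?_
      simp only [hA, hB, hu, hv]
      ring
    have e2 : ∑ i, s * ((6 * s * v i - 2 * u i) * gradSnd P (A s) (Bf s) i)
        = ∑ i, (6 * A s i + 4 * Bf s i) * gradSnd P (A s) (Bf s) i := by
      refine Finset.sum_congr rfl fun i _ => ?_
      simp only [hA, hB, hu, hv]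
      ring
    calc s * (∑ i, (u i - 2 * s * v i) * gradFst P (A s) (Bf s) i
          + ∑ i, (6 * s * v i - 2 * u i) * gradSnd P (A s) (Bf s) i)
        = ∑ i, s * ((u i - 2 * s * v i) * gradFst P (A s) (Bf s) i)
          + ∑ i, s * ((6 * s * v i - 2 * u i) * gradSnd P (A s) (Bf s) i) := by
          rw [mul_add, Finset.mul_sum, Finset.mul_sum]
      _ = -∑ i, (A s i + Bf s i) * gradFst P (A s) (Bf s) i
          + ∑ i, (6 * A s i + 4 * Bf s i) * gradSnd P (A s) (Bf s) i := by rw [e1, e2]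
      _ = 0 := h0
  have hqdiff : Differentiable ℝ q := fun s => ((key s).choose_spec.1).differentiableAt
  have hqcont : Continuous q := hqdiff.continuous
  have hstep : ∀ ε : ℝ, 0 < ε → ε ≤ 1 → q 1 = q ε := by
    intro ε hε hε1
    refine constant_of_has_deriv_right_zero (f := q) (a := ε) (b := 1)
      hqcont.continuousOn ?_ 1 ⟨hε1, le_refl 1⟩
    intro x hx
    obtain ⟨D, hD, hsD⟩ := key x
    have hx0 : x ≠ 0 := ne_of_gt (lt_of_lt_of_le hε hx.1)
    have hD0 : D = 0 := (mul_eq_zero.mp hsD).resolve_left hx0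
    exact (hD0 ▸ hD).hasDerivWithinAt
  have h01 : q 0 = q 1 := by
    have ht : Filter.Tendsto q (nhdsWithin 0 (Set.Ioi 0)) (nhds (q 0)) :=
      (hqcont.continuousWithinAt).tendsto
    have ht2 : Filter.Tendsto q (nhdsWithin 0 (Set.Ioi 0)) (nhds (q 1)) := by
      refine Filter.Tendsto.congr' ?_ (tendsto_const_nhds (α := ℝ) (x := q 1))
      filter_upwards [Ioc_mem_nhdsGT_of_mem
        (show (0 : ℝ) ∈ Set.Ico (0 : ℝ) 1 by constructor <;> norm_num)] with x hx
      exact hstep x hx.1 hx.2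
    exact tendsto_nhds_unique ht ht2
  have hA1 : A 1 = ξ := by funext i; simp only [hA, hu, hv]; ring
  have hB1 : Bf 1 = y := by funext i; simp only [hB, hu, hv]; ring
  have hA0 : A 0 = 0 := by funext i; simp [hA]
  have hB0 : Bf 0 = 0 := by funext i; simp [hB]
  have hq1 : q 1 = P ξ y := by rw [hq]; simp only [hA1, hB1]
  have hq0 : q 0 = 0 := by rw [hq]; simp only [hA0, hB0]; exact hP0
  rw [← hq1, ← h01, hq0]
end

section
/- Let d ≥ 1, let k ≥ 3 be an integer, and let P : ℝ^d × ℝ^d → ℝ be a homogeneous polynomial function of degree k such that P(ξ,y) + ⟨y + ξ, ∇_ξP(ξ,y)⟩ − ⟨6ξ + 4y, ∇_yP(ξ,y)⟩ = 0 for all ξ, y ∈ ℝ^d. Then P is identically zero. -/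
/-- eval ∘ aeval composition. -/
lemma eval_aeval_poly {σ : Type*} (g : σ → Polynomial ℝ) (Q : MvPolynomial σ ℝ) (s : ℝ) :
    Polynomial.eval s (MvPolynomial.aeval g Q) =
      MvPolynomial.eval (fun j => Polynomial.eval s (g j)) Q := by
  induction Q using MvPolynomial.induction_on with
  | C => simp
  | add p q hp hq => simp [map_add, hp, hq]
  | mul_X p i hp => simp [map_mul, hp]

/-- the uncurried evaluation map is analytic. -/
lemma analyticAt_F {d : ℕ} (Q : MvPolynomial (Fin d ⊕ Fin d) ℝ)
    (p : (Fin d → ℝ) × (Fin d → ℝ)) :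
    AnalyticAt ℝ (fun p : (Fin d → ℝ) × (Fin d → ℝ) =>
      MvPolynomial.eval (Sum.elim p.1 p.2) Q) p := by
  have h := AnalyticAt.aeval_mvPolynomial
    (𝕜 := ℝ) (f := fun p : (Fin d → ℝ) × (Fin d → ℝ) => Sum.elim p.1 p.2) (z := p) ?_ Q
  · have e : (fun p : (Fin d → ℝ) × (Fin d → ℝ) => MvPolynomial.eval (Sum.elim p.1 p.2) Q)
        = fun p => MvPolynomial.aeval (Sum.elim p.1 p.2) Q := by
      funext p
      rw [← MvPolynomial.coe_aeval_eq_eval]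
      rfl
    rw [e]
    exact h
  · intro j
    cases j with
    | inl i =>
      exact ((ContinuousLinearMap.proj i).comp (ContinuousLinearMap.fst ℝ _ _)).analyticAt p
    | inr i =>
      exact ((ContinuousLinearMap.proj i).comp (ContinuousLinearMap.snd ℝ _ _)).analyticAt p

lemma single_smul_one {d : ℕ} (c : ℝ) (i : Fin d) :
    c • (Pi.single i 1 : Fin d → ℝ) = Pi.single i c := by
  funext j
  simp [Pi.single_apply, mul_ite]

/-- the full Fréchet derivative of the uncurried map decomposes into gradients. -/
lemma grad_decomp {d : ℕ} (P : (Fin d → ℝ) → (Fin d → ℝ) → ℝ) (ξ y : Fin d → ℝ)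
    (hF : DifferentiableAt ℝ (fun p : (Fin d → ℝ) × (Fin d → ℝ) => P p.1 p.2) (ξ, y))
    (w z : Fin d → ℝ) :
    fderiv ℝ (fun p : (Fin d → ℝ) × (Fin d → ℝ) => P p.1 p.2) (ξ, y) (w, z)
      = ∑ i, w i * gradFst P ξ y i + ∑ i, z i * gradSnd P ξ y i := by
  set L := fderiv ℝ (fun p : (Fin d → ℝ) × (Fin d → ℝ) => P p.1 p.2) (ξ, y) with hL
  have hg1 : HasFDerivAt (fun ξ' : Fin d → ℝ => ((ξ', y) : (Fin d → ℝ) × (Fin d → ℝ)))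
      ((ContinuousLinearMap.id ℝ (Fin d → ℝ)).prod 0) ξ :=
    HasFDerivAt.prodMk (hasFDerivAt_id ξ) (hasFDerivAt_const y ξ)
  have hg2 : HasFDerivAt (fun y' : Fin d → ℝ => ((ξ, y') : (Fin d → ℝ) × (Fin d → ℝ)))
      ((0 : (Fin d → ℝ) →L[ℝ] (Fin d → ℝ)).prod (ContinuousLinearMap.id ℝ (Fin d → ℝ))) y :=
    HasFDerivAt.prodMk (hasFDerivAt_const ξ y) (hasFDerivAt_id y)
  have hc1 : HasFDerivAt (fun ξ' => P ξ' y)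
      (L.comp ((ContinuousLinearMap.id ℝ (Fin d → ℝ)).prod 0)) ξ :=
    HasFDerivAt.comp (g := fun p : (Fin d → ℝ) × (Fin d → ℝ) => P p.1 p.2) ξ hF.hasFDerivAt hg1
  have hc2 : HasFDerivAt (fun y' => P ξ y')
      (L.comp ((0 : (Fin d → ℝ) →L[ℝ] (Fin d → ℝ)).prod (ContinuousLinearMap.id ℝ (Fin d → ℝ)))) y :=
    HasFDerivAt.comp y hF.hasFDerivAt hg2
  have h1 : ∀ i, gradFst P ξ y i = L ((Pi.single i 1 : Fin d → ℝ), (0 : Fin d → ℝ)) := by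
    intro i
    rw [gradFst, hc1.fderiv]
    rfl
  have h2 : ∀ i, gradSnd P ξ y i = L ((0 : Fin d → ℝ), (Pi.single i 1 : Fin d → ℝ)) := by
    intro i
    rw [gradSnd, hc2.fderiv]
    rfl
  have hsplit : ((w, z) : (Fin d → ℝ) × (Fin d → ℝ))
      = (∑ i, (w i) • (((Pi.single i 1 : Fin d → ℝ), (0 : Fin d → ℝ))
          : (Fin d → ℝ) × (Fin d → ℝ)))
        + ∑ i, (z i) • (((0 : Fin d → ℝ), (Pi.single i 1 : Fin d → ℝ))
          : (Fin d → ℝ) × (Fin d → ℝ)) := by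
    apply Prod.ext
    · simp [Prod.fst_sum, single_smul_one, Finset.univ_sum_single]
    · simp [Prod.snd_sum, single_smul_one, Finset.univ_sum_single]
  calc L (w, z) = L ((∑ i, (w i) • (((Pi.single i 1 : Fin d → ℝ), (0 : Fin d → ℝ))
          : (Fin d → ℝ) × (Fin d → ℝ)))
        + ∑ i, (z i) • (((0 : Fin d → ℝ), (Pi.single i 1 : Fin d → ℝ))
          : (Fin d → ℝ) × (Fin d → ℝ))) := by rw [← hsplit]
    _ = ∑ i, w i * gradFst P ξ y i + ∑ i, z i * gradSnd P ξ y i := by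
        rw [map_add, map_sum, map_sum]
        congr 1
        · exact Finset.sum_congr rfl fun i _ => by rw [map_smul, h1 i, smul_eq_mul]
        · exact Finset.sum_congr rfl fun i _ => by rw [map_smul, h2 i, smul_eq_mul]

/-- paper, proof of Lemma 3.2: a homogeneous polynomial function `P` of
degree `k ≥ 3` with `P + ⟨y + ξ, ∇_ξP⟩ − ⟨6ξ + 4y, ∇_yP⟩ = 0` everywhere vanishes
identically. -/
theorem stmt5 (d : ℕ) (hd : 1 ≤ d) (k : ℕ) (hk : 3 ≤ k)
    (P : (Fin d → ℝ) → (Fin d → ℝ) → ℝ) (hP : IsPolyFun2 P)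
    (hhom : ∀ (s : ℝ) (ξ y : Fin d → ℝ), P (s • ξ) (s • y) = s ^ k * P ξ y)
    (heq : ∀ ξ y, P ξ y + ∑ i, (y i + ξ i) * gradFst P ξ y i
        - ∑ i, (6 * ξ i + 4 * y i) * gradSnd P ξ y i = 0) :
    ∀ ξ y, P ξ y = 0 := by
  obtain ⟨Q, hQ⟩ := hP
  intro ξ y
  have hFeq : (fun p : (Fin d → ℝ) × (Fin d → ℝ) => P p.1 p.2)
      = fun p => MvPolynomial.eval (Sum.elim p.1 p.2) Q := by
    funext p; exact hQ p.1 p.2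
  have hFdiff : ∀ p, DifferentiableAt ℝ (fun p : (Fin d → ℝ) × (Fin d → ℝ) => P p.1 p.2) p := by
    intro p; rw [hFeq]; exact (analyticAt_F Q p).differentiableAt
  set a : Fin d → ℝ := fun i => 3 * ξ i + y i with ha
  set b : Fin d → ℝ := fun i => -2 * ξ i - y i with hb
  set u : ℝ → (Fin d → ℝ) := fun s => s • a + (s ^ 2) • b with hu
  set v : ℝ → (Fin d → ℝ) := fun s => (-2 * s) • a + (-3 * s ^ 2) • b with hv
  set u' : ℝ → (Fin d → ℝ) := fun s => a + (2 * s) • b with hu'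
  set v' : ℝ → (Fin d → ℝ) := fun s => (-2 : ℝ) • a + (-6 * s) • b with hv'
  -- derivative of the curve
  have huv : ∀ s : ℝ, HasDerivAt (fun s => ((u s, v s) : (Fin d → ℝ) × (Fin d → ℝ)))
      (u' s, v' s) s := by
    intro s
    apply HasDerivAt.prodMk
    · have h1 : HasDerivAt (fun s : ℝ => s • a) ((1 : ℝ) • a) s :=
        (hasDerivAt_id s).smul_const a
      have h2 : HasDerivAt (fun s : ℝ => (s ^ 2) • b) ((2 * s ^ 1) • b) s :=
        (hasDerivAt_pow 2 s).smul_const b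
      have := h1.add h2
      rw [one_smul, pow_one] at this
      exact this
    · have h1 : HasDerivAt (fun s : ℝ => (-2 * s) • a) ((-2 * 1 : ℝ) • a) s :=
        ((hasDerivAt_id s).const_mul (-2)).smul_const a
      have h2 : HasDerivAt (fun s : ℝ => (-3 * s ^ 2) • b) ((-3 * (2 * s ^ 1)) • b) s :=
        ((hasDerivAt_pow 2 s).const_mul (-3)).smul_const b
      have := h1.add h2
      have e1 : (-2 * 1 : ℝ) = -2 := by norm_num
      have e2 : (-3 * (2 * s ^ 1) : ℝ) = -6 * s := by ring
      rw [e1, e2] at this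
      exact this
  -- the derivative of φ
  set D : ℝ → ℝ := fun s => ∑ i, u' s i * gradFst P (u s) (v s) i
      + ∑ i, v' s i * gradSnd P (u s) (v s) i with hD
  have hchain : ∀ s : ℝ, HasDerivAt (fun s => P (u s) (v s)) (D s) s := by
    intro s
    have hc := (hFdiff (u s, v s)).hasFDerivAt.comp_hasDerivAt s (huv s)
    have := grad_decomp P (u s) (v s) (hFdiff _) (u' s) (v' s)
    rw [this] at hc
    exact hc
  -- pointwise coordinate formulas
  have hui : ∀ s i, u s i = s * a i + s ^ 2 * b i := by
    intro s i; simp [hu]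
  have hvi : ∀ s i, v s i = -2 * s * a i + -3 * s ^ 2 * b i := by
    intro s i; simp [hv]
  have hu'i : ∀ s i, u' s i = a i + 2 * s * b i := by
    intro s i; simp [hu']
  have hv'i : ∀ s i, v' s i = -2 * a i + -6 * s * b i := by
    intro s i; simp [hv']
  -- the functional equation gives φ s = s * D s
  have hkey : ∀ s : ℝ, P (u s) (v s) = s * D s := by
    intro s
    have h0 := heq (u s) (v s)
    have e1 : ∀ i, (v s i + u s i) * gradFst P (u s) (v s) i
        = -(s * (u' s i * gradFst P (u s) (v s) i)) := by
      intro i; rw [hui, hvi, hu'i]; ring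
    have e2 : ∀ i, (6 * u s i + 4 * v s i) * gradSnd P (u s) (v s) i
        = s * (v' s i * gradSnd P (u s) (v s) i) := by
      intro i; rw [hui, hvi, hv'i]; ring
    rw [Finset.sum_congr rfl fun i _ => e1 i, Finset.sum_congr rfl fun i _ => e2 i] at h0
    rw [Finset.sum_neg_distrib, ← Finset.mul_sum, ← Finset.mul_sum] at h0
    simp only [hD]
    rw [mul_add]
    linarith
  -- the one-variable polynomial q with eval s q = φ s
  set g : (Fin d ⊕ Fin d) → Polynomial ℝ := Sum.elim
      (fun i => Polynomial.C (a i) * Polynomial.X + Polynomial.C (b i) * Polynomial.X ^ 2)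
      (fun i => Polynomial.C (-2 * a i) * Polynomial.X
        + Polynomial.C (-3 * b i) * Polynomial.X ^ 2) with hg
  set q : Polynomial ℝ := MvPolynomial.aeval g Q with hq
  have hφq : ∀ s : ℝ, P (u s) (v s) = q.eval s := by
    intro s
    rw [hq, eval_aeval_poly]
    have : (fun j => Polynomial.eval s (g j)) = Sum.elim (u s) (v s) := by
      funext j
      cases j with
      | inl i =>
        simp [hg, hui]
        ring
      | inr i =>
        simp [hg, hvi]
        ring
    rw [this]
    exact hQ (u s) (v s)
  -- identify D with the polynomial derivative
  have hDq : ∀ s : ℝ, D s = q.derivative.eval s := by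
    intro s
    have h1 : HasDerivAt (fun s => q.eval s) (q.derivative.eval s) s := q.hasDerivAt s
    have h2 : HasDerivAt (fun s => q.eval s) (D s) s := by
      have := hchain s
      have e : (fun s => P (u s) (v s)) = fun s => q.eval s := funext hφq
      rwa [e] at this
    exact h2.unique h1
  have hq1 : ∀ s : ℝ, q.eval s = s * q.derivative.eval s := by
    intro s
    rw [← hφq, hkey, hDq]
  -- the polynomial r from homogeneity
  set h : (Fin d ⊕ Fin d) → Polynomial ℝ := Sum.elim
      (fun i => Polynomial.C (a i) + Polynomial.C (b i) * Polynomial.X)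
      (fun i => Polynomial.C (-2 * a i) + Polynomial.C (-3 * b i) * Polynomial.X) with hh
  set r : Polynomial ℝ := MvPolynomial.aeval h Q with hr
  have hq2 : ∀ s : ℝ, q.eval s = s ^ k * r.eval s := by
    intro s
    rw [← hφq]
    have e1 : u s = s • (fun i => a i + s * b i) := by
      funext i; rw [hui]; simp; ring
    have e2 : v s = s • (fun i => -2 * a i + -3 * s * b i) := by
      funext i; rw [hvi]; simp; ring
    rw [e1, e2, hhom]
    congr 1
    rw [hr, eval_aeval_poly]
    have : (fun j => Polynomial.eval s (h j)) = Sum.elim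
        (fun i => a i + s * b i) (fun i => -2 * a i + -3 * s * b i) := by
      funext j
      cases j with
      | inl i => simp [hh]; ring
      | inr i => simp [hh]; ring
    rw [this]
    exact hQ _ _
  -- polynomial identities
  have hpq1 : q = Polynomial.X * q.derivative := by
    apply Polynomial.funext
    intro s
    rw [hq1 s]
    simp
  have hpq2 : q = Polynomial.X ^ k * r := by
    apply Polynomial.funext
    intro s
    rw [hq2 s]
    simp
  have hq0 : q = 0 := by
    ext n
    simp only [Polynomial.coeff_zero]
    rcases eq_or_ne n 1 with rfl | hn
    · rw [hpq2, mul_comm, Polynomial.coeff_mul_X_pow']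
      have : ¬ k ≤ 1 := by omega
      simp [this]
    · cases n with
      | zero =>
        conv_lhs => rw [hpq1]
        simp [Polynomial.mul_coeff_zero]
      | succ m =>
        have hm : m ≠ 0 := by omega
        have h1 : q.coeff (m + 1) = q.derivative.coeff m := by
          conv_lhs => rw [hpq1]
          rw [Polynomial.coeff_X_mul]
        rw [Polynomial.coeff_derivative] at h1
        have h2 : q.coeff (m + 1) * (m : ℝ) = 0 := by
          nlinarith [h1]
        rcases mul_eq_zero.1 h2 with h3 | h3
        · exact h3
        · exact absurd (Nat.cast_injective (h3.trans (Nat.cast_zero).symm)) hm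
  -- conclude
  have hu1 : u 1 = ξ := by
    funext i; rw [hui]; simp [ha, hb]; ring
  have hv1 : v 1 = y := by
    funext i; rw [hvi]; simp [ha, hb]; ring
  have := hφq 1
  rw [hu1, hv1, hq0] at this
  simpa using this
end

section
/- Let d ≥ 1, let g, G : ℝ^d → M_d(ℝ) be smooth matrix-valued maps with g(x) symmetric for every x, let S, φ : ℝ × ℝ^d × ℝ^d → ℝ be smooth, let h > 0 and C ∈ ℝ, and set u⁰(t,x,y) = C·φ(t,x,y)·exp(−S(t,x,y)/h). Then for all (t,x,y): P u⁰ = C·exp(−S/h)·[ −φ·HJ(S) + h·T(S,φ) − (h²/2)·tr(g(x)·D²_yφ) ], where P, HJ and T are as in the context. -/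
/-- Points `(t, x, y)` of `ℝ × ℝ^d × ℝ^d`. -/
abbrev Pt (d : ℕ) := ℝ × (Fin d → ℝ) × (Fin d → ℝ)

/-- Partial derivative `∂u/∂t` at `p = (t,x,y)`. -/
noncomputable def partialT {d : ℕ} (u : Pt d → ℝ) (p : Pt d) : ℝ :=
  fderiv ℝ u p (1, 0, 0)

/-- `i`-th component of the gradient `∇_x u` at `p = (t,x,y)`. -/
noncomputable def gradX {d : ℕ} (u : Pt d → ℝ) (p : Pt d) (i : Fin d) : ℝ :=
  fderiv ℝ u p (0, Pi.single i 1, 0)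

/-- `i`-th component of the gradient `∇_y u` at `p = (t,x,y)`. -/
noncomputable def gradY {d : ℕ} (u : Pt d → ℝ) (p : Pt d) (i : Fin d) : ℝ :=
  fderiv ℝ u p (0, 0, Pi.single i 1)

/-- `(i,j)` entry of the Hessian `D²_y u` at `p = (t,x,y)`. -/
noncomputable def hessY {d : ℕ} (u : Pt d → ℝ) (p : Pt d) (i j : Fin d) : ℝ :=
  fderiv ℝ (fun q => fderiv ℝ u q (0, 0, Pi.single j 1)) p (0, 0, Pi.single i 1)

/-- `k`-th component of `∇_x⟨G(x)y, y⟩`. -/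
noncomputable def gradGyy {d : ℕ} (G : (Fin d → ℝ) → Matrix (Fin d) (Fin d) ℝ)
    (x y : Fin d → ℝ) (k : Fin d) : ℝ :=
  fderiv ℝ (fun x' => ∑ i, ∑ j, G x' i j * y j * y i) x (Pi.single k 1)

/-- The Hamilton–Jacobi expression
`HJ(S) = ∂S/∂t + (1/2)⟨g(x)∇_yS, ∇_yS⟩ − ⟨G(x)y, ∇_xS⟩ + (1/2)⟨∇_x⟨G(x)y,y⟩, ∇_yS⟩`. -/
noncomputable def HJ {d : ℕ} (g G : (Fin d → ℝ) → Matrix (Fin d) (Fin d) ℝ)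
    (S : Pt d → ℝ) (p : Pt d) : ℝ :=
  partialT S p
    + (1 / 2) * ∑ i, (∑ j, g p.2.1 i j * gradY S p j) * gradY S p i
    - ∑ i, (∑ j, G p.2.1 i j * p.2.2 j) * gradX S p i
    + (1 / 2) * ∑ k, gradGyy G p.2.1 p.2.2 k * gradY S p k

/-- The transport expression
`T(S,φ) = ∂φ/∂t + ⟨g(x)∇_yS, ∇_yφ⟩ + (1/2)φ·tr(g(x)·D²_yS) − ⟨G(x)y, ∇_xφ⟩
          + (1/2)⟨∇_x⟨G(x)y,y⟩, ∇_yφ⟩`. -/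
noncomputable def Transport {d : ℕ} (g G : (Fin d → ℝ) → Matrix (Fin d) (Fin d) ℝ)
    (S φ : Pt d → ℝ) (p : Pt d) : ℝ :=
  partialT φ p
    + ∑ i, (∑ j, g p.2.1 i j * gradY S p j) * gradY φ p i
    + (1 / 2) * φ p * ∑ i, ∑ j, g p.2.1 i j * hessY S p i j
    - ∑ i, (∑ j, G p.2.1 i j * p.2.2 j) * gradX φ p i
    + (1 / 2) * ∑ k, gradGyy G p.2.1 p.2.2 k * gradY φ p k

/-- The operator
`Pu = h·∂u/∂t − (h²/2)·tr(g(x)·D²_yu) − h·⟨G(x)y, ∇_xu⟩ + (h/2)·⟨∇_x⟨G(x)y,y⟩, ∇_yu⟩`. -/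
noncomputable def Pop {d : ℕ} (g G : (Fin d → ℝ) → Matrix (Fin d) (Fin d) ℝ) (h : ℝ)
    (u : Pt d → ℝ) (p : Pt d) : ℝ :=
  h * partialT u p
    - (h ^ 2 / 2) * ∑ i, ∑ j, g p.2.1 i j * hessY u p i j
    - h * ∑ i, (∑ j, G p.2.1 i j * p.2.2 j) * gradX u p i
    + (h / 2) * ∑ k, gradGyy G p.2.1 p.2.2 k * gradY u p k

section Aux

variable {d : ℕ}

private lemma negdiv_diff (S : Pt d → ℝ) (hS : Differentiable ℝ S) (h : ℝ) :
    Differentiable ℝ (fun q : Pt d => -S q / h) := by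
  have : (fun q : Pt d => -S q / h) = fun q => (-(1 / h)) * S q := by funext q; ring
  rw [this]; exact hS.const_mul _

private lemma negdiv_fderiv (S : Pt d → ℝ) (hS : Differentiable ℝ S) (h : ℝ) (q : Pt d) :
    fderiv ℝ (fun q : Pt d => -S q / h) q = (-(1 / h)) • fderiv ℝ S q := by
  have h1 : (fun q : Pt d => -S q / h) = fun q => (-(1 / h)) * S q := by funext q; ring
  rw [h1, fderiv_const_mul (hS q)]

private lemma wkb_diff (S φ : Pt d → ℝ) (hS : Differentiable ℝ S) (hφ : Differentiable ℝ φ)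
    (h C : ℝ) :
    Differentiable ℝ (fun q : Pt d => C * φ q * Real.exp (-S q / h)) :=
  (hφ.const_mul C).mul (negdiv_diff S hS h).exp

private lemma wkb_fderiv (S φ : Pt d → ℝ) (hS : Differentiable ℝ S) (hφ : Differentiable ℝ φ)
    (h C : ℝ) (q v : Pt d) :
    fderiv ℝ (fun q : Pt d => C * φ q * Real.exp (-S q / h)) q v
      = C * Real.exp (-S q / h) * (fderiv ℝ φ q v - φ q * fderiv ℝ S q v / h) := by
  have hF := negdiv_diff S hS h
  have hE : Differentiable ℝ (fun q : Pt d => Real.exp (-S q / h)) := hF.exp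
  rw [fderiv_fun_mul ((hφ.const_mul C) q) (hE q), fderiv_exp (hF q), negdiv_fderiv S hS h,
    fderiv_const_mul (hφ q)]
  simp only [ContinuousLinearMap.add_apply, ContinuousLinearMap.smul_apply, smul_eq_mul]
  ring

private lemma smooth_fderiv_apply (f : Pt d → ℝ) (hf : ContDiff ℝ (⊤ : ℕ∞) f) (w : Pt d) :
    Differentiable ℝ (fun q : Pt d => fderiv ℝ f q w) :=
  (ContinuousLinearMap.apply ℝ ℝ w).differentiable.comp
    ((hf.fderiv_right (m := (⊤ : ℕ∞)) (by exact_mod_cast le_top)).differentiable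
      (by simp))

private lemma wkb_hessY (S φ : Pt d → ℝ) (hS : ContDiff ℝ (⊤ : ℕ∞) S)
    (hφ : ContDiff ℝ (⊤ : ℕ∞) φ) (h C : ℝ) (p : Pt d) (i j : Fin d) :
    hessY (fun q : Pt d => C * φ q * Real.exp (-S q / h)) p i j
      = C * Real.exp (-S p / h) * (hessY φ p i j
          - (gradY φ p i * gradY S p j + gradY S p i * gradY φ p j + φ p * hessY S p i j) / h
          + φ p * (gradY S p i * gradY S p j) / h ^ 2) := by
  have hSd : Differentiable ℝ S := hS.differentiable (by simp)
  have hφd : Differentiable ℝ φ := hφ.differentiable (by simp)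
  set ej : Pt d := (0, 0, Pi.single j 1) with hej
  set ei : Pt d := (0, 0, Pi.single i 1) with hei
  have hA := smooth_fderiv_apply φ hφ ej
  have hB := smooth_fderiv_apply S hS ej
  have hF := negdiv_diff S hSd h
  have hE : Differentiable ℝ (fun q : Pt d => Real.exp (-S q / h)) := hF.exp
  have hrw : (fun q : Pt d => fderiv ℝ (fun q : Pt d => C * φ q * Real.exp (-S q / h)) q ej)
      = fun q : Pt d => (C * Real.exp (-S q / h))
          * (fderiv ℝ φ q ej - φ q * fderiv ℝ S q ej / h) :=
    funext fun q => wkb_fderiv S φ hSd hφd h C q ej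
  have hw2 : DifferentiableAt ℝ
      (fun q : Pt d => fderiv ℝ φ q ej - φ q * fderiv ℝ S q ej / h) p := by
    have : (fun q : Pt d => fderiv ℝ φ q ej - φ q * fderiv ℝ S q ej / h)
        = fun q : Pt d => fderiv ℝ φ q ej - (1 / h) * (φ q * fderiv ℝ S q ej) := by
      funext q; ring
    rw [this]
    exact ((hA p).sub (((hφd p).mul (hB p)).const_mul _))
  have hw1 : DifferentiableAt ℝ (fun q : Pt d => C * Real.exp (-S q / h)) p :=
    (hE.const_mul C) p
  have hsub : (fun q : Pt d => fderiv ℝ φ q ej - φ q * fderiv ℝ S q ej / h)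
      = fun q : Pt d => fderiv ℝ φ q ej - (1 / h) * (φ q * fderiv ℝ S q ej) := by
    funext q; ring
  show fderiv ℝ (fun q : Pt d =>
      fderiv ℝ (fun q : Pt d => C * φ q * Real.exp (-S q / h)) q ej) p ei = _
  rw [hrw, fderiv_fun_mul hw1 hw2]
  have hd1 : fderiv ℝ (fun q : Pt d => C * Real.exp (-S q / h)) p ei
      = C * Real.exp (-S p / h) * (-(1 / h) * fderiv ℝ S p ei) := by
    rw [fderiv_const_mul (hE p), fderiv_exp (hF p), negdiv_fderiv S hSd h]
    simp only [ContinuousLinearMap.smul_apply, smul_eq_mul]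
    ring
  have hd2 : fderiv ℝ (fun q : Pt d => fderiv ℝ φ q ej - φ q * fderiv ℝ S q ej / h) p ei
      = fderiv ℝ (fun q : Pt d => fderiv ℝ φ q ej) p ei
        - (1 / h) * (fderiv ℝ φ p ei * fderiv ℝ S p ej
            + φ p * fderiv ℝ (fun q : Pt d => fderiv ℝ S q ej) p ei) := by
    rw [hsub, fderiv_fun_sub (hA p) (((hφd p).fun_mul (hB p)).const_mul _),
      fderiv_const_mul ((hφd p).fun_mul (hB p)), fderiv_fun_mul (hφd p) (hB p)]
    simp only [ContinuousLinearMap.sub_apply, ContinuousLinearMap.smul_apply,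
      ContinuousLinearMap.add_apply, smul_eq_mul]
    ring
  simp only [ContinuousLinearMap.add_apply, ContinuousLinearMap.smul_apply, smul_eq_mul]
  rw [hd1, hd2]
  have e1 : fderiv ℝ (fun q : Pt d => fderiv ℝ φ q ej) p ei = hessY φ p i j := rfl
  have e2 : fderiv ℝ (fun q : Pt d => fderiv ℝ S q ej) p ei = hessY S p i j := rfl
  have e3 : fderiv ℝ φ p ei = gradY φ p i := rfl
  have e4 : fderiv ℝ S p ei = gradY S p i := rfl
  have e5 : fderiv ℝ φ p ej = gradY φ p j := rfl
  have e6 : fderiv ℝ S p ej = gradY S p j := rfl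
  rw [e1, e2, e3, e4, e5, e6]
  ring

end Aux

/-- paper's equation (3.4): inserting the WKB ansatz
`u⁰ = C·φ·exp(−S/h)` into the degenerate diffusion operator and grouping by powers
of `h` gives `P u⁰ = C·exp(−S/h)·[−φ·HJ(S) + h·T(S,φ) − (h²/2)·tr(g(x)·D²_yφ)]`. -/
theorem stmt9 (d : ℕ) (hd : 1 ≤ d) (g G : (Fin d → ℝ) → Matrix (Fin d) (Fin d) ℝ)
    (hgsmooth : ∀ i j, ContDiff ℝ (⊤ : ℕ∞) fun x => g x i j)
    (hGsmooth : ∀ i j, ContDiff ℝ (⊤ : ℕ∞) fun x => G x i j)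
    (hgsymm : ∀ x, (g x).IsSymm)
    (S φ : Pt d → ℝ) (hS : ContDiff ℝ (⊤ : ℕ∞) S) (hφ : ContDiff ℝ (⊤ : ℕ∞) φ)
    (h : ℝ) (hh : 0 < h) (C : ℝ) (u0 : Pt d → ℝ)
    (hu0 : ∀ p, u0 p = C * φ p * Real.exp (-S p / h)) :
    ∀ p : Pt d,
      Pop g G h u0 p =
        C * Real.exp (-S p / h) *
          (-(φ p) * HJ g G S p + h * Transport g G S φ p
            - (h ^ 2 / 2) * ∑ i, ∑ j, g p.2.1 i j * hessY φ p i j) := by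
  intro p
  have hne : h ≠ 0 := ne_of_gt hh
  have hSd : Differentiable ℝ S := hS.differentiable (by simp)
  have hφd : Differentiable ℝ φ := hφ.differentiable (by simp)
  have hu0' : u0 = fun q => C * φ q * Real.exp (-S q / h) := funext hu0
  set x : Fin d → ℝ := p.2.1 with hx
  set y : Fin d → ℝ := p.2.2 with hy
  set Ep : ℝ := Real.exp (-S p / h) with hEp
  -- first derivatives of u0
  have hfd : ∀ v : Pt d, fderiv ℝ u0 p v
      = C * Ep * (fderiv ℝ φ p v - φ p * fderiv ℝ S p v / h) := by
    intro v; rw [hu0']; exact wkb_fderiv S φ hSd hφd h C p v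
  have hT : partialT u0 p = C * Ep * (partialT φ p - φ p * partialT S p / h) := by
    simp only [partialT]; exact hfd _
  have hX : ∀ i, gradX u0 p i = C * Ep * (gradX φ p i - φ p * gradX S p i / h) := by
    intro i; simp only [gradX]; exact hfd _
  have hY : ∀ i, gradY u0 p i = C * Ep * (gradY φ p i - φ p * gradY S p i / h) := by
    intro i; simp only [gradY]; exact hfd _
  have hH : ∀ i j, hessY u0 p i j
      = C * Ep * (hessY φ p i j
          - (gradY φ p i * gradY S p j + gradY S p i * gradY φ p j + φ p * hessY S p i j) / h
          + φ p * (gradY S p i * gradY S p j) / h ^ 2) := by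
    intro i j; rw [hu0']; exact wkb_hessY S φ hS hφ h C p i j
  -- sum identities converting double sums to the nested sums appearing in HJ/Transport
  have E1 : ∑ i, ∑ j, g x i j * (gradY φ p i * gradY S p j)
      = ∑ i, (∑ j, g x i j * gradY S p j) * gradY φ p i := by
    refine Finset.sum_congr rfl fun i _ => ?_
    rw [Finset.sum_mul]
    exact Finset.sum_congr rfl fun j _ => by ring
  have E2 : ∑ i, ∑ j, g x i j * (gradY S p i * gradY φ p j)
      = ∑ i, (∑ j, g x i j * gradY S p j) * gradY φ p i := by
    rw [Finset.sum_comm]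
    refine Finset.sum_congr rfl fun i _ => ?_
    rw [Finset.sum_mul]
    refine Finset.sum_congr rfl fun j _ => ?_
    rw [(hgsymm x).apply j i]
    ring
  have E3 : ∑ i, ∑ j, g x i j * (gradY S p i * gradY S p j)
      = ∑ i, (∑ j, g x i j * gradY S p j) * gradY S p i := by
    refine Finset.sum_congr rfl fun i _ => ?_
    rw [Finset.sum_mul]
    exact Finset.sum_congr rfl fun j _ => by ring
  -- expand the sums of derivatives of u0
  have L2 : ∑ i, ∑ j, g x i j * hessY u0 p i j
      = C * Ep * (∑ i, ∑ j, g x i j * hessY φ p i j)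
        - (C * Ep / h) * (2 * (∑ i, (∑ j, g x i j * gradY S p j) * gradY φ p i)
            + φ p * ∑ i, ∑ j, g x i j * hessY S p i j)
        + (C * Ep * φ p / h ^ 2) * (∑ i, (∑ j, g x i j * gradY S p j) * gradY S p i) := by
    have step : ∑ i, ∑ j, g x i j * hessY u0 p i j
        = ∑ i, ∑ j, ((C * Ep) * (g x i j * hessY φ p i j)
            - (C * Ep / h) * (g x i j * (gradY φ p i * gradY S p j))
            - (C * Ep / h) * (g x i j * (gradY S p i * gradY φ p j))
            - (C * Ep * φ p / h) * (g x i j * hessY S p i j)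
            + (C * Ep * φ p / h ^ 2) * (g x i j * (gradY S p i * gradY S p j))) := by
      refine Finset.sum_congr rfl fun i _ => Finset.sum_congr rfl fun j _ => ?_
      rw [hH i j]; ring
    rw [step]
    simp only [Finset.sum_add_distrib, Finset.sum_sub_distrib, ← Finset.mul_sum]
    rw [E1, E2, E3]
    ring
  have L3 : ∑ i, (∑ j, G x i j * y j) * gradX u0 p i
      = C * Ep * (∑ i, (∑ j, G x i j * y j) * gradX φ p i)
        - (C * Ep * φ p / h) * (∑ i, (∑ j, G x i j * y j) * gradX S p i) := by
    have step : ∑ i, (∑ j, G x i j * y j) * gradX u0 p i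
        = ∑ i, ((C * Ep) * ((∑ j, G x i j * y j) * gradX φ p i)
            - (C * Ep * φ p / h) * ((∑ j, G x i j * y j) * gradX S p i)) := by
      refine Finset.sum_congr rfl fun i _ => ?_
      rw [hX i]; ring
    rw [step, Finset.sum_sub_distrib, ← Finset.mul_sum, ← Finset.mul_sum]
  have L4 : ∑ k, gradGyy G x y k * gradY u0 p k
      = C * Ep * (∑ k, gradGyy G x y k * gradY φ p k)
        - (C * Ep * φ p / h) * (∑ k, gradGyy G x y k * gradY S p k) := by
    have step : ∑ k, gradGyy G x y k * gradY u0 p k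
        = ∑ k, ((C * Ep) * (gradGyy G x y k * gradY φ p k)
            - (C * Ep * φ p / h) * (gradGyy G x y k * gradY S p k)) := by
      refine Finset.sum_congr rfl fun k _ => ?_
      rw [hY k]; ring
    rw [step, Finset.sum_sub_distrib, ← Finset.mul_sum, ← Finset.mul_sum]
  simp only [Pop, HJ, Transport, ← hx, ← hy]
  rw [hT, L2, L3, L4]
  field_simp
  ring
end

section
/- Let d ≥ 1, let g, G : ℝ^d → M_d(ℝ) be smooth matrix-valued maps with g(x) symmetric for every x, let S, φ : ℝ × ℝ^d × ℝ^d → ℝ be smooth, let h > 0 and C ∈ ℝ, and set u⁰(t,x,y) = C·φ(t,x,y)·exp(−S(t,x,y)/h). If S satisfies the Hamilton–Jacobi equation HJ(S) = 0 everywhere and φ satisfies the transport equation T(S,φ) = 0 everywhere, then for all (t,x,y): P u⁰ = −(h²/2)·C·tr(g(x)·D²_yφ)·exp(−S/h). -/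
set_option maxHeartbeats 2000000 in
/-- paper's equation (uNULL): if `S` solves the Hamilton–Jacobi equation
and `φ` the transport equation, then the WKB ansatz `u⁰ = C·φ·exp(−S/h)` satisfies
`P u⁰ = −(h²/2)·C·tr(g(x)·D²_yφ)·exp(−S/h)`. -/
theorem stmt10 (d : ℕ) (hd : 1 ≤ d) (g G : (Fin d → ℝ) → Matrix (Fin d) (Fin d) ℝ)
    (hgsmooth : ∀ i j, ContDiff ℝ (⊤ : ℕ∞) fun x => g x i j)
    (hGsmooth : ∀ i j, ContDiff ℝ (⊤ : ℕ∞) fun x => G x i j)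
    (hgsymm : ∀ x, (g x).IsSymm)
    (S φ : Pt d → ℝ) (hS : ContDiff ℝ (⊤ : ℕ∞) S) (hφ : ContDiff ℝ (⊤ : ℕ∞) φ)
    (hHJ : ∀ p, HJ g G S p = 0) (hT : ∀ p, Transport g G S φ p = 0)
    (h : ℝ) (hh : 0 < h) (C : ℝ) (u0 : Pt d → ℝ)
    (hu0 : ∀ p, u0 p = C * φ p * Real.exp (-S p / h)) :
    ∀ p : Pt d,
      Pop g G h u0 p =
        -(h ^ 2 / 2) * C * (∑ i, ∑ j, g p.2.1 i j * hessY φ p i j)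
          * Real.exp (-S p / h) := by
  intro p
  have hSd : Differentiable ℝ S := hS.differentiable (by simp)
  have hφd : Differentiable ℝ φ := hφ.differentiable (by simp)
  set e : Pt d → ℝ := fun q => Real.exp (-S q / h) with he
  -- derivative of e
  have heD : ∀ q, HasFDerivAt e ((e q * (-(1 / h))) • fderiv ℝ S q) q := by
    intro q
    have h1 : (fun r => -S r / h) = fun r => (-(1 / h)) * S r := by
      funext r; ring
    have h2 : HasFDerivAt (fun r => -S r / h) ((-(1 / h)) • fderiv ℝ S q) q := by
      rw [h1]; exact (hSd q).hasFDerivAt.const_mul _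
    have h3 := h2.exp
    simpa [he, smul_smul] using h3
  have hu0eq : u0 = fun q => C * φ q * e q := funext hu0
  -- first derivative of u0
  have hD1 : ∀ q, HasFDerivAt u0
      ((C * e q) • fderiv ℝ φ q + (-(C * φ q * e q) / h) • fderiv ℝ S q) q := by
    intro q
    rw [hu0eq]
    have h1 : HasFDerivAt (fun r => C * φ r) (C • fderiv ℝ φ q) q :=
      (hφd q).hasFDerivAt.const_mul C
    have h2 := h1.mul (heD q)
    refine h2.congr_fderiv ?_
    refine ContinuousLinearMap.ext fun v => ?_
    simp [smul_smul]
    ring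
  have hgrad : ∀ q (v : ℝ × (Fin d → ℝ) × (Fin d → ℝ)),
      fderiv ℝ u0 q v
        = C * e q * fderiv ℝ φ q v - C * φ q * e q / h * fderiv ℝ S q v := by
    intro q v
    rw [(hD1 q).fderiv]
    simp [smul_smul]
    ring
  -- second derivative of u0
  have hhess : ∀ v w : ℝ × (Fin d → ℝ) × (Fin d → ℝ),
      fderiv ℝ (fun q => fderiv ℝ u0 q w) p v
        = C * e p * fderiv ℝ (fun q => fderiv ℝ φ q w) p v
          - C * e p / h * (fderiv ℝ S p v * fderiv ℝ φ p w)
          - C * e p / h * (fderiv ℝ φ p v * fderiv ℝ S p w)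
          - C * φ p * e p / h * fderiv ℝ (fun q => fderiv ℝ S q w) p v
          + C * φ p * e p / h ^ 2 * (fderiv ℝ S p v * fderiv ℝ S p w) := by
    intro v w
    have hφw : ContDiff ℝ (⊤ : ℕ∞) (fun q => fderiv ℝ φ q w) :=
      (hφ.fderiv_right (by exact_mod_cast le_rfl)).clm_apply contDiff_const
    have hSw : ContDiff ℝ (⊤ : ℕ∞) (fun q => fderiv ℝ S q w) :=
      (hS.fderiv_right (by exact_mod_cast le_rfl)).clm_apply contDiff_const
    have hDφ : HasFDerivAt (fun q => fderiv ℝ φ q w)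
        (fderiv ℝ (fun q => fderiv ℝ φ q w) p) p :=
      ((hφw.differentiable (by simp)) p).hasFDerivAt
    have hDS : HasFDerivAt (fun q => fderiv ℝ S q w)
        (fderiv ℝ (fun q => fderiv ℝ S q w) p) p :=
      ((hSw.differentiable (by simp)) p).hasFDerivAt
    have hfun : (fun q => fderiv ℝ u0 q w)
        = fun q => C * (e q * fderiv ℝ φ q w)
            - C / h * (φ q * e q * fderiv ℝ S q w) := by
      funext q; rw [hgrad]; ring
    have hA : HasFDerivAt (fun q => C * (e q * fderiv ℝ φ q w))
        (C • (e p • fderiv ℝ (fun q => fderiv ℝ φ q w) p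
          + fderiv ℝ φ p w • ((e p * (-(1 / h))) • fderiv ℝ S p))) p :=
      ((heD p).mul hDφ).const_mul C
    have hB : HasFDerivAt (fun q => C / h * (φ q * e q * fderiv ℝ S q w))
        ((C / h) • ((φ p * e p) • fderiv ℝ (fun q => fderiv ℝ S q w) p
          + fderiv ℝ S p w • (φ p • ((e p * (-(1 / h))) • fderiv ℝ S p)
            + e p • fderiv ℝ φ p))) p :=
      (((hφd p).hasFDerivAt.mul (heD p)).mul hDS).const_mul (C / h)
    have hAB : HasFDerivAt (fun q => C * (e q * fderiv ℝ φ q w)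
        - C / h * (φ q * e q * fderiv ℝ S q w)) _ p := hA.sub hB
    rw [hfun, hAB.fderiv]
    simp [smul_smul]
    ring
  -- pointwise formulas in the notation of the statement
  have hpt : partialT u0 p
      = C * e p * partialT φ p - C * φ p * e p / h * partialT S p := by
    simp only [partialT]; exact hgrad p _
  have hgx : ∀ i, gradX u0 p i
      = C * e p * gradX φ p i - C * φ p * e p / h * gradX S p i := by
    intro i; simp only [gradX]; exact hgrad p _
  have hgy : ∀ i, gradY u0 p i
      = C * e p * gradY φ p i - C * φ p * e p / h * gradY S p i := by
    intro i; simp only [gradY]; exact hgrad p _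
  have hhe : ∀ i j, hessY u0 p i j
      = C * e p * hessY φ p i j
        - C * e p / h * (gradY S p i * gradY φ p j)
        - C * e p / h * (gradY φ p i * gradY S p j)
        - C * φ p * e p / h * hessY S p i j
        + C * φ p * e p / h ^ 2 * (gradY S p i * gradY S p j) := by
    intro i j
    simp only [hessY, gradY]
    exact hhess _ _
  -- symmetry of g
  have hsymm : ∀ i j, g p.2.1 j i = g p.2.1 i j := fun i j => (hgsymm p.2.1).apply i j
  -- the key sum computations
  have hsB : ∑ i, ∑ j, g p.2.1 i j * (gradY S p i * gradY φ p j)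
      = ∑ i, ∑ j, g p.2.1 i j * gradY S p j * gradY φ p i := by
    rw [Finset.sum_comm]
    refine Finset.sum_congr rfl fun i _ => Finset.sum_congr rfl fun j _ => ?_
    rw [hsymm]; ring
  have hsum : ∑ i, ∑ j, g p.2.1 i j * hessY u0 p i j
      = C * e p * (∑ i, ∑ j, g p.2.1 i j * hessY φ p i j)
        - C * e p / h * (∑ i, ∑ j, g p.2.1 i j * gradY S p j * gradY φ p i)
        - C * e p / h * (∑ i, ∑ j, g p.2.1 i j * gradY S p j * gradY φ p i)
        - C * φ p * e p / h * (∑ i, ∑ j, g p.2.1 i j * hessY S p i j)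
        + C * φ p * e p / h ^ 2 * (∑ i, ∑ j, g p.2.1 i j * gradY S p j * gradY S p i) := by
    calc ∑ i, ∑ j, g p.2.1 i j * hessY u0 p i j
        = ∑ i, ∑ j, (C * e p * (g p.2.1 i j * hessY φ p i j)
            - C * e p / h * (g p.2.1 i j * (gradY S p i * gradY φ p j))
            - C * e p / h * (g p.2.1 i j * gradY S p j * gradY φ p i)
            - C * φ p * e p / h * (g p.2.1 i j * hessY S p i j)
            + C * φ p * e p / h ^ 2 * (g p.2.1 i j * gradY S p j * gradY S p i)) := by
          refine Finset.sum_congr rfl fun i _ => Finset.sum_congr rfl fun j _ => ?_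
          rw [hhe]; ring
      _ = _ := by
          simp only [Finset.sum_add_distrib, Finset.sum_sub_distrib, ← Finset.mul_sum]
          rw [hsB]
  have hsum2 : ∑ i, (∑ j, G p.2.1 i j * p.2.2 j) * gradX u0 p i
      = C * e p * (∑ i, (∑ j, G p.2.1 i j * p.2.2 j) * gradX φ p i)
        - C * φ p * e p / h * (∑ i, (∑ j, G p.2.1 i j * p.2.2 j) * gradX S p i) := by
    calc ∑ i, (∑ j, G p.2.1 i j * p.2.2 j) * gradX u0 p i
        = ∑ i, (C * e p * ((∑ j, G p.2.1 i j * p.2.2 j) * gradX φ p i)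
            - C * φ p * e p / h * ((∑ j, G p.2.1 i j * p.2.2 j) * gradX S p i)) := by
          refine Finset.sum_congr rfl fun i _ => ?_
          rw [hgx]; ring
      _ = _ := by
          simp only [Finset.sum_sub_distrib, ← Finset.mul_sum]
  have hsum3 : ∑ k, gradGyy G p.2.1 p.2.2 k * gradY u0 p k
      = C * e p * (∑ k, gradGyy G p.2.1 p.2.2 k * gradY φ p k)
        - C * φ p * e p / h * (∑ k, gradGyy G p.2.1 p.2.2 k * gradY S p k) := by
    calc ∑ k, gradGyy G p.2.1 p.2.2 k * gradY u0 p k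
        = ∑ k, (C * e p * (gradGyy G p.2.1 p.2.2 k * gradY φ p k)
            - C * φ p * e p / h * (gradGyy G p.2.1 p.2.2 k * gradY S p k)) := by
          refine Finset.sum_congr rfl fun k _ => ?_
          rw [hgy]; ring
      _ = _ := by
          simp only [Finset.sum_sub_distrib, ← Finset.mul_sum]
  -- bring HJ and transport to double-sum form
  have hHJ' := hHJ p
  have hT' := hT p
  simp only [HJ, Finset.sum_mul] at hHJ'
  simp only [Transport, Finset.sum_mul] at hT'
  simp only [Pop]
  rw [hpt, hsum, hsum2, hsum3]
  simp only [Finset.sum_mul]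
  have hne : h ≠ 0 := ne_of_gt hh
  linear_combination (norm := (simp only [he]; field_simp; ring)) (C * e p * h) * hT' + (-(C * φ p * e p)) * hHJ'
end

section
/- Let d ≥ 1, let g, G : ℝ^d → M_d(ℝ) be smooth with g(x) symmetric for every x, let S, φ : ℝ × ℝ^d × ℝ^d → ℝ be smooth, let χ : ℝ^d × ℝ^d → ℝ be smooth, let h > 0 and C ∈ ℝ, and set u^D(t,x,y) = C·χ(x,y)·φ(t,x,y)·exp(−S(t,x,y)/h). If HJ(S) = 0 and T(S,φ) = 0 everywhere, then for all (t,x,y): P u^D = −(h²/2)·C·exp(−S/h)·[ χ·tr(g(x)·D²_yφ) + φ·tr(g(x)·D²_yχ) + 2⟨g(x)∇_yχ, ∇_yφ⟩ − (2/h)·φ·⟨g(x)∇_yχ, ∇_yS⟩ + (2/h)·φ·⟨G(x)y, ∇_xχ⟩ − (1/h)·φ·⟨∇_x⟨G(x)y,y⟩, ∇_yχ⟩ ]. -/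
/-- `i`-th component of the gradient `∇_x χ` of a cutoff `χ : ℝ^d × ℝ^d → ℝ`. -/
noncomputable def cutGradX {d : ℕ} (χ : (Fin d → ℝ) × (Fin d → ℝ) → ℝ)
    (z : (Fin d → ℝ) × (Fin d → ℝ)) (i : Fin d) : ℝ :=
  fderiv ℝ χ z (Pi.single i 1, 0)

/-- `i`-th component of the gradient `∇_y χ` of a cutoff `χ : ℝ^d × ℝ^d → ℝ`. -/
noncomputable def cutGradY {d : ℕ} (χ : (Fin d → ℝ) × (Fin d → ℝ) → ℝ)
    (z : (Fin d → ℝ) × (Fin d → ℝ)) (i : Fin d) : ℝ :=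
  fderiv ℝ χ z (0, Pi.single i 1)

/-- `(i,j)` entry of the Hessian `D²_y χ` of a cutoff `χ : ℝ^d × ℝ^d → ℝ`. -/
noncomputable def cutHessY {d : ℕ} (χ : (Fin d → ℝ) × (Fin d → ℝ) → ℝ)
    (z : (Fin d → ℝ) × (Fin d → ℝ)) (i j : Fin d) : ℝ :=
  fderiv ℝ (fun w => fderiv ℝ χ w (0, Pi.single j 1)) z (0, Pi.single i 1)

section Aux
variable {d : ℕ}

lemma contDiff_dirderiv {E : Type*} [NormedAddCommGroup E] [NormedSpace ℝ E]
    {f : E → ℝ} (hf : ContDiff ℝ (⊤ : ℕ∞) f) (v : E) :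
    ContDiff ℝ (⊤ : ℕ∞) (fun x => fderiv ℝ f x v) :=
  (hf.fderiv_right (m := (⊤:ℕ∞)) (by simp)).clm_apply contDiff_const

lemma dfac (M : Matrix (Fin d) (Fin d) ℝ) (a b : Fin d → ℝ) :
    ∑ i, ∑ j, M i j * (a j * b i) = ∑ i, (∑ j, M i j * a j) * b i := by
  refine Finset.sum_congr rfl fun i _ => ?_
  rw [Finset.sum_mul]; exact Finset.sum_congr rfl fun j _ => by ring

lemma dswap (M : Matrix (Fin d) (Fin d) ℝ) (hM : M.IsSymm) (a b : Fin d → ℝ) :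
    ∑ i, ∑ j, M i j * (a i * b j) = ∑ i, ∑ j, M i j * (a j * b i) := by
  rw [Finset.sum_comm]
  exact Finset.sum_congr rfl fun j _ => Finset.sum_congr rfl fun i _ => by
    rw [hM.apply i j]

variable {χ : (Fin d → ℝ) × (Fin d → ℝ) → ℝ} {S φ : Pt d → ℝ} {h C : ℝ}

lemma fd1 (hχ : ContDiff ℝ (⊤ : ℕ∞) χ) (hS : ContDiff ℝ (⊤ : ℕ∞) S)
    (hφ : ContDiff ℝ (⊤ : ℕ∞) φ) (v q) :
    fderiv ℝ (fun q : Pt d => C * χ (q.2.1, q.2.2) * φ q * Real.exp (-S q / h)) q v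
      = C * Real.exp (-S q / h) *
        (fderiv ℝ χ (q.2.1, q.2.2) (v.2.1, v.2.2) * φ q
          + χ (q.2.1, q.2.2) * fderiv ℝ φ q v
          - (1 / h) * (χ (q.2.1, q.2.2) * φ q * fderiv ℝ S q v)) := by
  have hA : HasFDerivAt (fun q : Pt d => χ (q.2.1, q.2.2))
      ((fderiv ℝ χ (q.2.1, q.2.2)).comp (ContinuousLinearMap.snd ℝ ℝ ((Fin d → ℝ) × (Fin d → ℝ)))) q :=
    ((hχ.differentiable (by simp)) q.2).hasFDerivAt.comp q hasFDerivAt_snd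
  have hφq := ((hφ.differentiable (by simp)) q).hasFDerivAt
  have hSq := ((hS.differentiable (by simp)) q).hasFDerivAt
  have hE : HasFDerivAt (fun q : Pt d => Real.exp (-S q / h)) _ q := ((hSq.neg).mul_const h⁻¹).exp
  have htot : HasFDerivAt
      (fun q : Pt d => C * χ (q.2.1, q.2.2) * φ q * Real.exp (-S q / h)) _ q :=
    ((hA.const_mul C).mul hφq).mul hE
  rw [htot.fderiv]
  simp only [ContinuousLinearMap.add_apply, ContinuousLinearMap.smul_apply, smul_eq_mul,
    ContinuousLinearMap.neg_apply, ContinuousLinearMap.comp_apply,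
    ContinuousLinearMap.coe_snd']
  simp only [Pi.mul_apply, Pi.neg_apply]
  rw [show -S q * h⁻¹ = -S q / h from (div_eq_mul_inv _ _).symm]
  ring

lemma fd2 (hχ : ContDiff ℝ (⊤ : ℕ∞) χ) (hS : ContDiff ℝ (⊤ : ℕ∞) S)
    (hφ : ContDiff ℝ (⊤ : ℕ∞) φ) (p : Pt d) (i j : Fin d) :
    hessY (fun q : Pt d => C * χ (q.2.1, q.2.2) * φ q * Real.exp (-S q / h)) p i j
      = C * Real.exp (-S p / h) * φ p * cutHessY χ (p.2.1, p.2.2) i j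
        + C * Real.exp (-S p / h) * χ (p.2.1, p.2.2) * hessY φ p i j
        - C * Real.exp (-S p / h) * χ (p.2.1, p.2.2) * φ p / h * hessY S p i j
        + C * Real.exp (-S p / h) * (cutGradY χ (p.2.1, p.2.2) j * gradY φ p i)
        + C * Real.exp (-S p / h) * (cutGradY χ (p.2.1, p.2.2) i * gradY φ p j)
        - C * Real.exp (-S p / h) * φ p / h * (cutGradY χ (p.2.1, p.2.2) j * gradY S p i)
        - C * Real.exp (-S p / h) * φ p / h * (cutGradY χ (p.2.1, p.2.2) i * gradY S p j)
        - C * Real.exp (-S p / h) * χ (p.2.1, p.2.2) / h * (gradY S p j * gradY φ p i)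
        - C * Real.exp (-S p / h) * χ (p.2.1, p.2.2) / h * (gradY S p i * gradY φ p j)
        + C * Real.exp (-S p / h) * χ (p.2.1, p.2.2) * φ p / h ^ 2 *
            (gradY S p j * gradY S p i) := by
  unfold hessY cutHessY cutGradY gradY
  have e1 : (fun q : Pt d => fderiv ℝ
        (fun q : Pt d => C * χ (q.2.1, q.2.2) * φ q * Real.exp (-S q / h)) q
        (0, 0, Pi.single j 1))
      = fun q : Pt d => C * Real.exp (-S q / h) *
          (fderiv ℝ χ (q.2.1, q.2.2) (0, Pi.single j 1) * φ q
            + χ (q.2.1, q.2.2) * fderiv ℝ φ q (0, 0, Pi.single j 1)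
            - (1 / h) * (χ (q.2.1, q.2.2) * φ q * fderiv ℝ S q (0, 0, Pi.single j 1))) := by
    funext q
    rw [fd1 hχ hS hφ]
  rw [e1]
  have hA : HasFDerivAt (fun q : Pt d => χ (q.2.1, q.2.2))
      ((fderiv ℝ χ (p.2.1, p.2.2)).comp (ContinuousLinearMap.snd ℝ ℝ ((Fin d → ℝ) × (Fin d → ℝ)))) p :=
    ((hχ.differentiable (by simp)) p.2).hasFDerivAt.comp p hasFDerivAt_snd
  have hBj : HasFDerivAt (fun q : Pt d => fderiv ℝ χ (q.2.1, q.2.2) (0, Pi.single j 1))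
      ((fderiv ℝ (fun w => fderiv ℝ χ w (0, Pi.single j 1)) (p.2.1, p.2.2)).comp
        (ContinuousLinearMap.snd ℝ ℝ ((Fin d → ℝ) × (Fin d → ℝ)))) p :=
    (((contDiff_dirderiv hχ (0, Pi.single j 1)).differentiable (by simp)) p.2).hasFDerivAt.comp
      p hasFDerivAt_snd
  have hφp := ((hφ.differentiable (by simp)) p).hasFDerivAt
  have hSp := ((hS.differentiable (by simp)) p).hasFDerivAt
  have hDφj : HasFDerivAt (fun q : Pt d => fderiv ℝ φ q (0, 0, Pi.single j 1))
      (fderiv ℝ (fun q : Pt d => fderiv ℝ φ q (0, 0, Pi.single j 1)) p) p :=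
    (((contDiff_dirderiv hφ (0, 0, Pi.single j 1)).differentiable (by simp)) p).hasFDerivAt
  have hDSj : HasFDerivAt (fun q : Pt d => fderiv ℝ S q (0, 0, Pi.single j 1))
      (fderiv ℝ (fun q : Pt d => fderiv ℝ S q (0, 0, Pi.single j 1)) p) p :=
    (((contDiff_dirderiv hS (0, 0, Pi.single j 1)).differentiable (by simp)) p).hasFDerivAt
  have hE : HasFDerivAt (fun q : Pt d => Real.exp (-S q / h)) _ p :=
    ((hSp.neg).mul_const h⁻¹).exp
  have htot : HasFDerivAt (fun q : Pt d => C * Real.exp (-S q / h) *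
          (fderiv ℝ χ (q.2.1, q.2.2) (0, Pi.single j 1) * φ q
            + χ (q.2.1, q.2.2) * fderiv ℝ φ q (0, 0, Pi.single j 1)
            - (1 / h) * (χ (q.2.1, q.2.2) * φ q * fderiv ℝ S q (0, 0, Pi.single j 1)))) _ p :=
    (hE.const_mul C).mul
      (((hBj.mul hφp).add (hA.mul hDφj)).sub
        (((hA.mul hφp).mul hDSj).const_mul (1 / h)))
  rw [htot.fderiv]
  simp only [ContinuousLinearMap.add_apply, ContinuousLinearMap.smul_apply, smul_eq_mul,
    ContinuousLinearMap.neg_apply, ContinuousLinearMap.comp_apply,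
    ContinuousLinearMap.coe_snd', ContinuousLinearMap.sub_apply]
  simp only [Pi.mul_apply, Pi.neg_apply]
  rw [show -S p * h⁻¹ = -S p / h from (div_eq_mul_inv _ _).symm]
  ring
end Aux

/-- paper's equation (3.28): the localized WKB ansatz
`u^D = C·χ·φ·exp(−S/h)`, built from solutions of the Hamilton–Jacobi and transport
equations, satisfies the inhomogeneous diffusion equation with inhomogeneity supported
where the derivatives of the cutoff `χ` are nonzero. -/

theorem stmt11 (d : ℕ) (hd : 1 ≤ d) (g G : (Fin d → ℝ) → Matrix (Fin d) (Fin d) ℝ)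
    (hgsmooth : ∀ i j, ContDiff ℝ (⊤ : ℕ∞) fun x => g x i j)
    (hGsmooth : ∀ i j, ContDiff ℝ (⊤ : ℕ∞) fun x => G x i j)
    (hgsymm : ∀ x, (g x).IsSymm)
    (S φ : Pt d → ℝ) (hS : ContDiff ℝ (⊤ : ℕ∞) S) (hφ : ContDiff ℝ (⊤ : ℕ∞) φ)
    (χ : (Fin d → ℝ) × (Fin d → ℝ) → ℝ) (hχ : ContDiff ℝ (⊤ : ℕ∞) χ)
    (hHJ : ∀ p, HJ g G S p = 0) (hT : ∀ p, Transport g G S φ p = 0)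
    (h : ℝ) (hh : 0 < h) (C : ℝ) (uD : Pt d → ℝ)
    (huD : ∀ p : Pt d, uD p = C * χ (p.2.1, p.2.2) * φ p * Real.exp (-S p / h)) :
    ∀ p : Pt d,
      Pop g G h uD p =
        -(h ^ 2 / 2) * C * Real.exp (-S p / h) *
          (χ (p.2.1, p.2.2) * ∑ i, ∑ j, g p.2.1 i j * hessY φ p i j
            + φ p * ∑ i, ∑ j, g p.2.1 i j * cutHessY χ (p.2.1, p.2.2) i j
            + 2 * ∑ i, (∑ j, g p.2.1 i j * cutGradY χ (p.2.1, p.2.2) j) * gradY φ p i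
            - (2 / h) * φ p *
                ∑ i, (∑ j, g p.2.1 i j * cutGradY χ (p.2.1, p.2.2) j) * gradY S p i
            + (2 / h) * φ p *
                ∑ i, (∑ j, G p.2.1 i j * p.2.2 j) * cutGradX χ (p.2.1, p.2.2) i
            - (1 / h) * φ p *
                ∑ k, gradGyy G p.2.1 p.2.2 k * cutGradY χ (p.2.1, p.2.2) k) := by
  intro p
  have hne : h ≠ 0 := ne_of_gt hh
  have hu : uD = fun q : Pt d => C * χ (q.2.1, q.2.2) * φ q * Real.exp (-S q / h) :=
    funext fun q => huD q
  -- first-order pieces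
  have P1 : partialT (fun q : Pt d => C * χ (q.2.1, q.2.2) * φ q * Real.exp (-S q / h)) p
      = C * Real.exp (-S p / h) *
        (χ (p.2.1, p.2.2) * partialT φ p
          - (1 / h) * (χ (p.2.1, p.2.2) * φ p * partialT S p)) := by
    unfold partialT
    rw [fd1 hχ hS hφ]
    norm_num [Prod.mk_zero_zero]
  have P3 : ∀ i, gradX (fun q : Pt d => C * χ (q.2.1, q.2.2) * φ q * Real.exp (-S q / h)) p i
      = C * Real.exp (-S p / h) *
        (cutGradX χ (p.2.1, p.2.2) i * φ p + χ (p.2.1, p.2.2) * gradX φ p i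
          - (1 / h) * (χ (p.2.1, p.2.2) * φ p * gradX S p i)) := by
    intro i
    unfold gradX cutGradX
    rw [fd1 hχ hS hφ]
  have P4 : ∀ i, gradY (fun q : Pt d => C * χ (q.2.1, q.2.2) * φ q * Real.exp (-S q / h)) p i
      = C * Real.exp (-S p / h) *
        (cutGradY χ (p.2.1, p.2.2) i * φ p + χ (p.2.1, p.2.2) * gradY φ p i
          - (1 / h) * (χ (p.2.1, p.2.2) * φ p * gradY S p i)) := by
    intro i
    unfold gradY cutGradY
    rw [fd1 hχ hS hφ]
  -- the Hessian sum
  have Q2 : ∑ i, ∑ j, g p.2.1 i j *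
        hessY (fun q : Pt d => C * χ (q.2.1, q.2.2) * φ q * Real.exp (-S q / h)) p i j
      = C * Real.exp (-S p / h) *
          (φ p * ∑ i, ∑ j, g p.2.1 i j * cutHessY χ (p.2.1, p.2.2) i j
            + χ (p.2.1, p.2.2) * ∑ i, ∑ j, g p.2.1 i j * hessY φ p i j
            - χ (p.2.1, p.2.2) * φ p / h * ∑ i, ∑ j, g p.2.1 i j * hessY S p i j
            + 2 * ∑ i, (∑ j, g p.2.1 i j * cutGradY χ (p.2.1, p.2.2) j) * gradY φ p i
            - (2 * φ p / h) *
                ∑ i, (∑ j, g p.2.1 i j * cutGradY χ (p.2.1, p.2.2) j) * gradY S p i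
            - (2 * χ (p.2.1, p.2.2) / h) *
                ∑ i, (∑ j, g p.2.1 i j * gradY S p j) * gradY φ p i
            + (χ (p.2.1, p.2.2) * φ p / h ^ 2) *
                ∑ i, (∑ j, g p.2.1 i j * gradY S p j) * gradY S p i) := by
    have step1 : ∑ i, ∑ j, g p.2.1 i j *
          hessY (fun q : Pt d => C * χ (q.2.1, q.2.2) * φ q * Real.exp (-S q / h)) p i j
        = ∑ i, ∑ j,
          ((C * Real.exp (-S p / h) * φ p) * (g p.2.1 i j * cutHessY χ (p.2.1, p.2.2) i j)
            + (C * Real.exp (-S p / h) * χ (p.2.1, p.2.2)) * (g p.2.1 i j * hessY φ p i j)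
            - (C * Real.exp (-S p / h) * χ (p.2.1, p.2.2) * φ p / h) *
                (g p.2.1 i j * hessY S p i j)
            + (C * Real.exp (-S p / h)) *
                (g p.2.1 i j * (cutGradY χ (p.2.1, p.2.2) j * gradY φ p i))
            + (C * Real.exp (-S p / h)) *
                (g p.2.1 i j * (cutGradY χ (p.2.1, p.2.2) i * gradY φ p j))
            - (C * Real.exp (-S p / h) * φ p / h) *
                (g p.2.1 i j * (cutGradY χ (p.2.1, p.2.2) j * gradY S p i))
            - (C * Real.exp (-S p / h) * φ p / h) *
                (g p.2.1 i j * (cutGradY χ (p.2.1, p.2.2) i * gradY S p j))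
            - (C * Real.exp (-S p / h) * χ (p.2.1, p.2.2) / h) *
                (g p.2.1 i j * (gradY S p j * gradY φ p i))
            - (C * Real.exp (-S p / h) * χ (p.2.1, p.2.2) / h) *
                (g p.2.1 i j * (gradY S p i * gradY φ p j))
            + (C * Real.exp (-S p / h) * χ (p.2.1, p.2.2) * φ p / h ^ 2) *
                (g p.2.1 i j * (gradY S p j * gradY S p i))) :=
      Finset.sum_congr rfl fun i _ => Finset.sum_congr rfl fun j _ => by
        rw [fd2 hχ hS hφ]; ring
    rw [step1]
    simp only [Finset.sum_add_distrib, Finset.sum_sub_distrib, ← Finset.mul_sum]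
    rw [dswap (g p.2.1) (hgsymm p.2.1) (cutGradY χ (p.2.1, p.2.2)) (gradY φ p),
        dswap (g p.2.1) (hgsymm p.2.1) (cutGradY χ (p.2.1, p.2.2)) (gradY S p),
        dswap (g p.2.1) (hgsymm p.2.1) (gradY S p) (gradY φ p),
        dfac (g p.2.1) (cutGradY χ (p.2.1, p.2.2)) (gradY φ p),
        dfac (g p.2.1) (cutGradY χ (p.2.1, p.2.2)) (gradY S p),
        dfac (g p.2.1) (gradY S p) (gradY φ p),
        dfac (g p.2.1) (gradY S p) (gradY S p)]
    ring
  -- the x-gradient sum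
  have Q3 : ∑ i, (∑ j, G p.2.1 i j * p.2.2 j) *
        gradX (fun q : Pt d => C * χ (q.2.1, q.2.2) * φ q * Real.exp (-S q / h)) p i
      = C * Real.exp (-S p / h) *
          (φ p * ∑ i, (∑ j, G p.2.1 i j * p.2.2 j) * cutGradX χ (p.2.1, p.2.2) i
            + χ (p.2.1, p.2.2) * ∑ i, (∑ j, G p.2.1 i j * p.2.2 j) * gradX φ p i
            - (1 / h) * (χ (p.2.1, p.2.2) * φ p *
                ∑ i, (∑ j, G p.2.1 i j * p.2.2 j) * gradX S p i)) := by
    have step1 : ∑ i, (∑ j, G p.2.1 i j * p.2.2 j) *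
          gradX (fun q : Pt d => C * χ (q.2.1, q.2.2) * φ q * Real.exp (-S q / h)) p i
        = ∑ i, ((C * Real.exp (-S p / h) * φ p) *
              ((∑ j, G p.2.1 i j * p.2.2 j) * cutGradX χ (p.2.1, p.2.2) i)
            + (C * Real.exp (-S p / h) * χ (p.2.1, p.2.2)) *
              ((∑ j, G p.2.1 i j * p.2.2 j) * gradX φ p i)
            - (C * Real.exp (-S p / h) * χ (p.2.1, p.2.2) * φ p / h) *
              ((∑ j, G p.2.1 i j * p.2.2 j) * gradX S p i)) :=
      Finset.sum_congr rfl fun i _ => by rw [P3 i]; ring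
    rw [step1]
    simp only [Finset.sum_add_distrib, Finset.sum_sub_distrib, ← Finset.mul_sum]
    field_simp
  -- the y-gradient sum
  have Q4 : ∑ k, gradGyy G p.2.1 p.2.2 k *
        gradY (fun q : Pt d => C * χ (q.2.1, q.2.2) * φ q * Real.exp (-S q / h)) p k
      = C * Real.exp (-S p / h) *
          (φ p * ∑ k, gradGyy G p.2.1 p.2.2 k * cutGradY χ (p.2.1, p.2.2) k
            + χ (p.2.1, p.2.2) * ∑ k, gradGyy G p.2.1 p.2.2 k * gradY φ p k
            - (1 / h) * (χ (p.2.1, p.2.2) * φ p *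
                ∑ k, gradGyy G p.2.1 p.2.2 k * gradY S p k)) := by
    have step1 : ∑ k, gradGyy G p.2.1 p.2.2 k *
          gradY (fun q : Pt d => C * χ (q.2.1, q.2.2) * φ q * Real.exp (-S q / h)) p k
        = ∑ k, ((C * Real.exp (-S p / h) * φ p) *
              (gradGyy G p.2.1 p.2.2 k * cutGradY χ (p.2.1, p.2.2) k)
            + (C * Real.exp (-S p / h) * χ (p.2.1, p.2.2)) *
              (gradGyy G p.2.1 p.2.2 k * gradY φ p k)
            - (C * Real.exp (-S p / h) * χ (p.2.1, p.2.2) * φ p / h) *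
              (gradGyy G p.2.1 p.2.2 k * gradY S p k)) :=
      Finset.sum_congr rfl fun k _ => by rw [P4 k]; ring
    rw [step1]
    simp only [Finset.sum_add_distrib, Finset.sum_sub_distrib, ← Finset.mul_sum]
    field_simp
  -- use the HJ and transport equations
  have hH := hHJ p
  have hTp := hT p
  unfold HJ at hH
  unfold Transport at hTp
  have hSt : partialT S p
      = ∑ i, (∑ j, G p.2.1 i j * p.2.2 j) * gradX S p i
        - (1 / 2) * ∑ i, (∑ j, g p.2.1 i j * gradY S p j) * gradY S p i
        - (1 / 2) * ∑ k, gradGyy G p.2.1 p.2.2 k * gradY S p k := by linarith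
  have hφt : partialT φ p
      = ∑ i, (∑ j, G p.2.1 i j * p.2.2 j) * gradX φ p i
        - ∑ i, (∑ j, g p.2.1 i j * gradY S p j) * gradY φ p i
        - (1 / 2) * φ p * ∑ i, ∑ j, g p.2.1 i j * hessY S p i j
        - (1 / 2) * ∑ k, gradGyy G p.2.1 p.2.2 k * gradY φ p k := by linarith
  rw [hu]
  unfold Pop
  rw [P1, Q2, Q3, Q4, hSt, hφt]
  field_simp
  ring
end
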